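/- arXiv:2503.10534 — 2 statements merged into one kernel-verified Lean document; each statement's English description precedes it below -/
import Mathlib

section
/- (Lemma: per-iteration objective bound for Pro-DUCA) Suppose the problem setup and the saddle point hypotheses hold, and the sequences (x^k)_{k≥0}, (y^k)_{k≥0}, (z^k)_{k≥0} are generated by Pro-DUCA (no compactness of the X_i is assumed). Then for every k ≥ 0: f(x^{k+1}) − f(x*) ≤ (1/(2ρ))·( (v^k − v*)ᵀH̃†(v^k − v*) − (v^{k+1} − v*)ᵀH̃†(v^{k+1} − v*) ) + ½(‖y^k‖²_A − ‖y^{k+1}‖²_A) + (α/2)(‖x^k − x*‖² − ‖x^{k+1} − x*‖²). -/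
open Matrix
open scoped Kronecker

abbrev Blk (m p : ℕ) := Sum (Fin m) (Fin p)
abbrev Idx (N m p : ℕ) := Fin N × Blk m p

def projK {N m p : ℕ} (y : Idx N m p → ℝ) : Idx N m p → ℝ :=
  fun ij =>
    match ij with
    | (i, Sum.inl j) => max (y (i, Sum.inl j)) 0
    | (i, Sum.inr j) => y (i, Sum.inr j)

def projKpolar {N m p : ℕ} (y : Idx N m p → ℝ) : Idx N m p → ℝ :=
  fun ij =>
    match ij with
    | (i, Sum.inl j) => min (y (i, Sum.inl j)) 0
    | (_, Sum.inr _) => 0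

def memK {N m p : ℕ} (y : Idx N m p → ℝ) : Prop :=
  ∀ (i : Fin N) (j : Fin m), 0 ≤ y (i, Sum.inl j)

def IsMPInv {n : Type*} [Fintype n] [DecidableEq n] (M Md : Matrix n n ℝ) : Prop :=
  M * Md * M = M ∧ Md * M * Md = Md ∧ (M * Md)ᵀ = M * Md ∧ (Md * M)ᵀ = Md * M

def quadForm {n : Type*} [Fintype n] (M : Matrix n n ℝ) (w : n → ℝ) : ℝ :=
  w ⬝ᵥ (M *ᵥ w)

section AuxLemmas

lemma sq_max_le (t h : ℝ) : max (t+h) 0 ^ 2 ≤ max t 0 ^2 + 2*h*(max t 0) + h^2 := by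
  have h1 : max (t+h) 0 ≤ |max t 0 + h| := by
    rcases le_total (t+h) 0 with hc|hc
    · rw [max_eq_right hc]; exact abs_nonneg _
    · rw [max_eq_left hc]
      calc t + h ≤ max t 0 + h := by gcongr; exact le_max_left _ _
        _ ≤ |max t 0 + h| := le_abs_self _
  have h0 : 0 ≤ max (t+h) 0 := le_max_right _ _
  calc max (t+h) 0 ^2 ≤ |max t 0 + h|^2 := by
        apply pow_le_pow_left₀ h0 h1
    _ = (max t 0 + h)^2 := sq_abs _
    _ = max t 0 ^2 + 2*h*(max t 0) + h^2 := by ring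

lemma le_of_forall_lam (a b C : ℝ) (hC : 0 ≤ C)
    (h : ∀ l : ℝ, 0 < l → l ≤ 1 → a ≤ b + l * C) : a ≤ b := by
  by_contra hab
  push_neg at hab
  have hεpos : 0 < a - b := by linarith
  have hl : 0 < min 1 ((a-b) / (2*(C+1))) := lt_min one_pos (by positivity)
  have h1 := h _ hl (min_le_left _ _)
  have h2 : min 1 ((a-b)/(2*(C+1))) * C ≤ (a-b)/2 := by
    calc min 1 ((a-b)/(2*(C+1))) * C ≤ ((a-b)/(2*(C+1))) * C :=
          mul_le_mul_of_nonneg_right (min_le_right _ _) hC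
      _ ≤ (a-b)/2 := by
          rw [div_mul_eq_mul_div, div_le_div_iff₀ (by positivity) (by positivity)]
          nlinarith
  linarith

lemma psd_transpose_eq {n : Type*} [Fintype n] (M : Matrix n n ℝ) (h : M.PosSemidef) : Mᵀ = M := by
  ext i j
  rw [Matrix.transpose_apply, ← h.1.apply i j]
  simp [Matrix.conjTranspose_apply]

lemma sym_dot {n : Type*} [Fintype n] (M : Matrix n n ℝ) (h : Mᵀ = M) (v w : n → ℝ) :
    v ⬝ᵥ M *ᵥ w = w ⬝ᵥ M *ᵥ v := by
  rw [Matrix.dotProduct_mulVec]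
  nth_rewrite 1 [← h]
  rw [Matrix.vecMul_transpose, dotProduct_comm]

lemma mulVec_dot {n : Type*} [Fintype n] (M : Matrix n n ℝ) (v w : n → ℝ) :
    (M *ᵥ v) ⬝ᵥ w = v ⬝ᵥ (Mᵀ *ᵥ w) := by
  rw [dotProduct_comm, Matrix.dotProduct_mulVec]
  conv_lhs => rw [← Matrix.transpose_transpose M, Matrix.vecMul_transpose]
  rw [dotProduct_comm]

lemma mp_unique {n : Type*} [Fintype n] [DecidableEq n] (A B C : Matrix n n ℝ)
    (hB : IsMPInv A B) (hC : IsMPInv A C) : B = C := by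
  obtain ⟨b1, b2, b3, b4⟩ := hB
  obtain ⟨c1, c2, c3, c4⟩ := hC
  have hAB : A * B = A * C := by
    calc A * B = (A*B)ᵀ := b3.symm
      _ = Bᵀ * Aᵀ := Matrix.transpose_mul _ _
      _ = Bᵀ * (Aᵀ * Cᵀ * Aᵀ) := by
            rw [show Aᵀ * Cᵀ * Aᵀ = ((A*C)*A)ᵀ by
                  rw [Matrix.transpose_mul, Matrix.transpose_mul, Matrix.mul_assoc]]
            rw [c1]
      _ = (Bᵀ * Aᵀ) * (Cᵀ * Aᵀ) := by simp only [Matrix.mul_assoc]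
      _ = (A*B)ᵀ * (A*C)ᵀ := by rw [Matrix.transpose_mul, Matrix.transpose_mul]
      _ = (A*B) * (A*C) := by rw [b3, c3]
      _ = (A*B*A) * C := by simp only [Matrix.mul_assoc]
      _ = A * C := by rw [b1]
  have hBA : B * A = C * A := by
    calc B * A = (B*A)ᵀ := b4.symm
      _ = Aᵀ * Bᵀ := Matrix.transpose_mul _ _
      _ = (Aᵀ * Cᵀ * Aᵀ) * Bᵀ := by
            rw [show Aᵀ * Cᵀ * Aᵀ = ((A*C)*A)ᵀ by
                  rw [Matrix.transpose_mul, Matrix.transpose_mul, Matrix.mul_assoc]]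
            rw [c1]
      _ = (Aᵀ * Cᵀ) * (Aᵀ * Bᵀ) := by simp only [Matrix.mul_assoc]
      _ = (C*A)ᵀ * (B*A)ᵀ := by rw [Matrix.transpose_mul, Matrix.transpose_mul]
      _ = (C*A) * (B*A) := by rw [b4, c4]
      _ = C * (A*B*A) := by simp only [Matrix.mul_assoc]
      _ = C * A := by rw [b1]
  calc B = B*A*B := b2.symm
    _ = (C*A)*B := by rw [hBA]
    _ = C*(A*B) := by simp only [Matrix.mul_assoc]
    _ = C*(A*C) := by rw [hAB]
    _ = C*A*C := by simp only [Matrix.mul_assoc]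
    _ = C := c2

lemma mp_symm {n : Type*} [Fintype n] [DecidableEq n] (A Ad : Matrix n n ℝ)
    (hA : Aᵀ = A) (h : IsMPInv A Ad) : Adᵀ = Ad := by
  obtain ⟨h1, h2, h3, h4⟩ := h
  have c1 : A * Adᵀ * A = A := by
    calc A * Adᵀ * A = Aᵀ * Adᵀ * Aᵀ := by rw [hA]
      _ = (A * (Ad * A))ᵀ := by
            rw [Matrix.transpose_mul, Matrix.transpose_mul, Matrix.mul_assoc]
      _ = (A * Ad * A)ᵀ := by rw [Matrix.mul_assoc]
      _ = Aᵀ := by rw [h1]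
      _ = A := hA
  have c2 : Adᵀ * A * Adᵀ = Adᵀ := by
    calc Adᵀ * A * Adᵀ = Adᵀ * Aᵀ * Adᵀ := by rw [hA]
      _ = (Ad * (A * Ad))ᵀ := by
            rw [Matrix.transpose_mul, Matrix.transpose_mul, Matrix.mul_assoc]
      _ = (Ad * A * Ad)ᵀ := by rw [Matrix.mul_assoc]
      _ = Adᵀ := by rw [h2]
  have c3 : (A * Adᵀ)ᵀ = A * Adᵀ := by
    have e1 : A * Adᵀ = Ad * A := by
      calc A * Adᵀ = Aᵀ * Adᵀ := by rw [hA]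
        _ = (Ad * A)ᵀ := by rw [Matrix.transpose_mul]
        _ = Ad * A := h4
    rw [e1, h4]
  have c4 : (Adᵀ * A)ᵀ = Adᵀ * A := by
    have e2 : Adᵀ * A = A * Ad := by
      calc Adᵀ * A = Adᵀ * Aᵀ := by rw [hA]
        _ = (A * Ad)ᵀ := by rw [Matrix.transpose_mul]
        _ = A * Ad := h3
    rw [e2, h3]
  exact (mp_unique A Ad Adᵀ ⟨h1, h2, h3, h4⟩ ⟨c1, c2, c3, c4⟩).symm

lemma mp_sandwich {n : Type*} [Fintype n] [DecidableEq n]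
    (Htld Htdag Hhalf : Matrix n n ℝ) (hsq : Hhalf * Hhalf = Htld)
    (hsymH : Hhalfᵀ = Hhalf) (h : IsMPInv Htld Htdag) :
    Hhalf * (Htdag * Htld) = Hhalf := by
  have hz : Htld * (1 - Htdag * Htld) = 0 := by
    rw [Matrix.mul_sub, Matrix.mul_one, ← Matrix.mul_assoc, h.1, sub_self]
  have key : (Hhalf * (1 - Htdag * Htld))ᴴ * (Hhalf * (1 - Htdag * Htld)) = 0 := by
    have hct : ∀ M : Matrix n n ℝ, Mᴴ = Mᵀ := fun M => by
      ext i j; simp [Matrix.conjTranspose_apply]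
    rw [hct, Matrix.transpose_mul]
    calc (1 - Htdag * Htld)ᵀ * Hhalfᵀ * (Hhalf * (1 - Htdag * Htld))
        = (1 - Htdag * Htld)ᵀ * (Hhalfᵀ * Hhalf * (1 - Htdag * Htld)) := by
          simp only [Matrix.mul_assoc]
      _ = (1 - Htdag * Htld)ᵀ * (Htld * (1 - Htdag * Htld)) := by rw [hsymH, hsq]
      _ = 0 := by rw [hz, Matrix.mul_zero]
  have h0 : Hhalf * (1 - Htdag * Htld) = 0 :=
    Matrix.conjTranspose_mul_self_eq_zero.mp key
  rw [Matrix.mul_sub, Matrix.mul_one, sub_eq_zero] at h0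
  exact h0.symm

lemma kron_mulVec {N m p : ℕ} (P : Matrix (Fin N) (Fin N) ℝ) (w : Idx N m p → ℝ) (ℓ : Idx N m p) :
    ((P ⊗ₖ (1 : Matrix (Blk m p) (Blk m p) ℝ)) *ᵥ w) ℓ = ∑ i', P ℓ.1 i' * w (i', ℓ.2) := by
  obtain ⟨i, j⟩ := ℓ
  rw [Matrix.mulVec]
  rw [show (fun j_1 => (P ⊗ₖ (1 : Matrix (Blk m p) (Blk m p) ℝ)) (i,j) j_1) ⬝ᵥ w
        = ∑ x : Idx N m p, (P ⊗ₖ (1 : Matrix (Blk m p) (Blk m p) ℝ)) (i,j) x * w x from rfl]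
  rw [Fintype.sum_prod_type]
  simp only [Matrix.kroneckerMap_apply, Matrix.one_apply]
  congr 1
  ext i'
  rw [Finset.sum_eq_single j]
  · simp
  · intro b _ hb; simp [Ne.symm hb]
  · intro h; exact absurd (Finset.mem_univ j) h

lemma kron_quad {N m p : ℕ} (P : Matrix (Fin N) (Fin N) ℝ) (w : Idx N m p → ℝ) :
    quadForm (P ⊗ₖ (1 : Matrix (Blk m p) (Blk m p) ℝ)) w
      = ∑ j : Blk m p, quadForm P (fun i => w (i, j)) := by
  unfold quadForm
  rw [show w ⬝ᵥ ((P ⊗ₖ (1 : Matrix (Blk m p) (Blk m p) ℝ)) *ᵥ w)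
        = ∑ x : Idx N m p, w x * ((P ⊗ₖ (1 : Matrix (Blk m p) (Blk m p) ℝ)) *ᵥ w) x from rfl]
  rw [Fintype.sum_prod_type]
  rw [Finset.sum_comm]
  congr 1
  ext j
  rw [show (fun i => w (i,j)) ⬝ᵥ (P *ᵥ fun i => w (i,j))
        = ∑ i, w (i,j) * (P *ᵥ fun i => w (i,j)) i from rfl]
  congr 1
  ext i
  rw [kron_mulVec]
  rfl

lemma kron_transpose {N m p : ℕ} (P : Matrix (Fin N) (Fin N) ℝ) :
    (P ⊗ₖ (1 : Matrix (Blk m p) (Blk m p) ℝ))ᵀ = Pᵀ ⊗ₖ (1 : Matrix (Blk m p) (Blk m p) ℝ) := by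
  ext ⟨i,j⟩ ⟨i',j'⟩
  simp only [Matrix.transpose_apply, Matrix.kroneckerMap_apply, Matrix.one_apply,
    Matrix.transpose_apply]
  by_cases h : j = j' <;> simp [h, eq_comm]

lemma kron_quad_nonneg {N m p : ℕ} (P : Matrix (Fin N) (Fin N) ℝ) (hP : P.PosSemidef)
    (w : Idx N m p → ℝ) : 0 ≤ quadForm (P ⊗ₖ (1 : Matrix (Blk m p) (Blk m p) ℝ)) w := by
  rw [kron_quad]
  apply Finset.sum_nonneg
  intro j _
  simpa [quadForm] using hP.dotProduct_mulVec_nonneg (fun i => w (i,j))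

end AuxLemmas

theorem stmt13
    (N m p : ℕ) (hN : 1 ≤ N) (hm : 1 ≤ m) (hp : 1 ≤ p)
    (d : Fin N → ℕ)
    (X : ∀ i : Fin N, Set (Fin (d i) → ℝ))
    (hXne : ∀ i, (X i).Nonempty) (hXcl : ∀ i, IsClosed (X i))
    (hXcv : ∀ i, Convex ℝ (X i))
    (f : ∀ i : Fin N, (Fin (d i) → ℝ) → ℝ)
    (hf : ∀ i, ConvexOn ℝ Set.univ (f i))
    (g : ∀ i : Fin N, (Fin (d i) → ℝ) → Fin m → ℝ)
    (hg : ∀ i j, ConvexOn ℝ Set.univ (fun xi => g i xi j))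
    (B : ∀ i : Fin N, Matrix (Fin p) (Fin (d i)) ℝ) (c : ∀ i : Fin N, Fin p → ℝ)
    (F : (∀ i, Fin (d i) → ℝ) → ℝ) (hF : ∀ x, F x = ∑ i, f i (x i))
    (tg : (∀ i, Fin (d i) → ℝ) → Idx N m p → ℝ)
    (htg1 : ∀ x (i : Fin N) (j : Fin m), tg x (i, Sum.inl j) = g i (x i) j)
    (htg2 : ∀ x (i : Fin N) (j : Fin p), tg x (i, Sum.inr j) = (B i *ᵥ x i + c i) j)
    (ρ : ℝ) (hρ : 0 < ρ)
    (PA PH PHt : Matrix (Fin N) (Fin N) ℝ)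
    (hPA : PA.PosSemidef) (hPH : PH.PosSemidef) (hPHt : PHt.PosSemidef)
    (hDdiag : (PA + ρ • PH).IsDiag) (hDpd : (PA + ρ • PH).PosDef)
    (hHHt : (PH - PHt).PosSemidef)
    (hPHnull : ∀ v : Fin N → ℝ, PH *ᵥ v = 0 ↔ ∃ t : ℝ, v = fun _ => t)
    (hPHtnull : ∀ v : Fin N → ℝ, PHt *ᵥ v = 0 ↔ ∃ t : ℝ, v = fun _ => t)
    (A Htld D : Matrix (Idx N m p) (Idx N m p) ℝ)
    (hA : A = PA ⊗ₖ (1 : Matrix (Blk m p) (Blk m p) ℝ))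
    (hHtld : Htld = PHt ⊗ₖ (1 : Matrix (Blk m p) (Blk m p) ℝ))
    (hD : D = A + ρ • (PH ⊗ₖ (1 : Matrix (Blk m p) (Blk m p) ℝ)))
    (Hhalf : Matrix (Idx N m p) (Idx N m p) ℝ)
    (hHhalfpsd : Hhalf.PosSemidef) (hHhalfsq : Hhalf * Hhalf = Htld)
    (Htdag : Matrix (Idx N m p) (Idx N m p) ℝ) (hHtdag : IsMPInv Htld Htdag)
    (Hhalfdag : Matrix (Idx N m p) (Idx N m p) ℝ) (hHhalfdag : IsMPInv Hhalf Hhalfdag)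
    (x : ℕ → ∀ i, Fin (d i) → ℝ) (y z : ℕ → Idx N m p → ℝ)
    (hxX : ∀ k, ∀ i, x (k + 1) i ∈ X i)
    (hy0 : memK (y 0))
    (hyupd : ∀ k, y (k + 1) = projK (D⁻¹ *ᵥ ((A *ᵥ y k) - (Hhalf *ᵥ z k) + tg (x (k + 1)))))
    (hzupd : ∀ k, z (k + 1) = z k + ρ • (Hhalf *ᵥ y (k + 1)))
    (α : ℝ) (hα : 0 < α)
    (hxmin : ∀ k, ∀ w, (∀ i, w i ∈ X i) →
      F (x (k + 1))
          + (1 / 2) * quadForm D⁻¹ (projK ((A *ᵥ y k) - (Hhalf *ᵥ z k) + tg (x (k + 1))))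
          + (α / 2) * ∑ i, ∑ j, (x (k + 1) i j - x k i j) ^ 2
        ≤ F w + (1 / 2) * quadForm D⁻¹ (projK ((A *ᵥ y k) - (Hhalf *ᵥ z k) + tg w))
          + (α / 2) * ∑ i, ∑ j, (w i j - x k i j) ^ 2)
    (xs : ∀ i, Fin (d i) → ℝ) (hxsX : ∀ i, xs i ∈ X i)
    (hxsg : ∀ j, (∑ i, g i (xs i) j) ≤ 0)
    (hxsh : ∀ j, (∑ i, (B i *ᵥ xs i + c i) j) = 0)
    (mus : Fin m → ℝ) (hmus : ∀ j, 0 ≤ mus j) (lams : Fin p → ℝ)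
    (hcs : (∑ j, mus j * ∑ i, g i (xs i) j) = 0)
    (hsaddle : ∀ w, (∀ i, w i ∈ X i) →
      F xs + (∑ j, mus j * ∑ i, g i (xs i) j) + (∑ j, lams j * ∑ i, (B i *ᵥ xs i + c i) j)
        ≤ F w + (∑ j, mus j * ∑ i, g i (w i) j) + (∑ j, lams j * ∑ i, (B i *ᵥ w i + c i) j))
    (ys : Idx N m p → ℝ) (hys : ∀ (i : Fin N) (j : Blk m p), ys (i, j) = Sum.elim mus lams j)
    (zstar vstar : Idx N m p → ℝ)
    (hzstar : zstar = Hhalfdag *ᵥ tg xs)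
    (hvstar : vstar = Hhalf *ᵥ zstar)
    :
    ∀ k : ℕ,
      F (x (k + 1)) - F xs
        ≤ (1 / (2 * ρ)) *
            (quadForm Htdag ((Hhalf *ᵥ z k) - vstar)
              - quadForm Htdag ((Hhalf *ᵥ z (k + 1)) - vstar))
          + (1 / 2) * (quadForm A (y k) - quadForm A (y (k + 1)))
          + (α / 2) * ((∑ i, ∑ j, (x k i j - xs i j) ^ 2)
              - ∑ i, ∑ j, (x (k + 1) i j - xs i j) ^ 2) := by
  intro k
  have hNR : (0:ℝ) < N := by
    have h1 : (1:ℝ) ≤ (N:ℝ) := by exact_mod_cast hN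
    linarith
  -- ===== diagonal structure of D =====
  have hDkron : D = (PA + ρ • PH) ⊗ₖ (1 : Matrix (Blk m p) (Blk m p) ℝ) := by
    rw [hD, hA, Matrix.add_kronecker, Matrix.smul_kronecker]
  set dd : Idx N m p → ℝ := fun ℓ => (PA + ρ • PH) ℓ.1 ℓ.1 with hdd
  have hddpos : ∀ ℓ : Idx N m p, 0 < dd ℓ := by
    intro ℓ
    have h1 := hDpd.dotProduct_mulVec_pos (x := Pi.single ℓ.1 1) (by intro hc; simpa using congrFun hc ℓ.1)
    simpa [Matrix.mulVec_single, single_dotProduct, hdd] using h1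
  have hddne : ∀ ℓ : Idx N m p, dd ℓ ≠ 0 := fun ℓ => ne_of_gt (hddpos ℓ)
  have hDdiagonal : D = Matrix.diagonal dd := by
    rw [hDkron]
    ext ⟨i,j⟩ ⟨i',j'⟩
    by_cases hii : i = i'
    · subst hii
      by_cases hjj : j = j'
      · subst hjj
        simp [Matrix.diagonal_apply, Matrix.kroneckerMap_apply, Matrix.one_apply, hdd]
      · simp [Matrix.diagonal_apply, Matrix.kroneckerMap_apply, Matrix.one_apply, hjj,
          Prod.ext_iff]
    · have h0 : (PA + ρ • PH) i i' = 0 := hDdiag hii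
      simp [Matrix.diagonal_apply, Matrix.kroneckerMap_apply, h0, Prod.ext_iff, hii]
  have hDinv : D⁻¹ = Matrix.diagonal (fun ℓ => (dd ℓ)⁻¹) := by
    apply Matrix.inv_eq_right_inv
    rw [hDdiagonal, Matrix.diagonal_mul_diagonal]
    rw [show (fun i => dd i * (dd i)⁻¹) = fun _ => (1:ℝ) by
      funext ℓ; exact mul_inv_cancel₀ (hddne ℓ)]
    exact Matrix.diagonal_one
  have hquadDinv : ∀ v : Idx N m p → ℝ,
      quadForm D⁻¹ v = ∑ ℓ : Idx N m p, (dd ℓ)⁻¹ * (v ℓ)^2 := by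
    intro v
    rw [hDinv]
    unfold quadForm dotProduct
    apply Finset.sum_congr rfl
    intro ℓ _
    rw [Matrix.mulVec_diagonal]
    ring
  -- ===== y-update structure =====
  set u : Idx N m p → ℝ := (A *ᵥ y k) - (Hhalf *ᵥ z k) + tg (x (k+1)) with hu
  set aa : Idx N m p → ℝ := projK u with haa
  have hyp : y (k+1) = fun ℓ => (dd ℓ)⁻¹ * aa ℓ := by
    rw [hyupd k]
    have h1 : D⁻¹ *ᵥ u = fun ℓ => (dd ℓ)⁻¹ * u ℓ := by
      rw [hDinv]; funext ℓ; rw [Matrix.mulVec_diagonal]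
    rw [← hu, h1]
    funext ℓ
    obtain ⟨i, j | j⟩ := ℓ
    · show max ((dd (i, Sum.inl j))⁻¹ * u (i, Sum.inl j)) 0
        = (dd (i, Sum.inl j))⁻¹ * max (u (i, Sum.inl j)) 0
      rw [mul_max_of_nonneg _ _ (inv_nonneg.mpr (hddpos (i, Sum.inl j)).le), mul_zero]
    · rfl
  have hypK : ∀ (i : Fin N) (j : Fin m), 0 ≤ y (k+1) (i, Sum.inl j) := by
    intro i j
    rw [hyp]
    have h1 : (0:ℝ) ≤ aa (i, Sum.inl j) := le_max_right _ _
    have h2 : (0:ℝ) ≤ (dd (i, Sum.inl j))⁻¹ := inv_nonneg.mpr (hddpos _).le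
    exact mul_nonneg h2 h1
  have hDyp : D *ᵥ y (k+1) = aa := by
    rw [hDdiagonal, hyp]
    funext ℓ
    rw [Matrix.mulVec_diagonal]
    exact mul_inv_cancel_left₀ (hddne ℓ) _
  -- ===== Step 1 : variational inequality from the x-update =====
  have hVI : F (x (k+1)) - F xs ≤ (y (k+1)) ⬝ᵥ (fun ℓ => tg xs ℓ - tg (x (k+1)) ℓ)
      + α * ∑ i, ∑ j, (x (k+1) i j - x k i j) * (xs i j - x (k+1) i j) := by
    set δv : Idx N m p → ℝ := fun ℓ => tg xs ℓ - tg (x (k+1)) ℓ with hδv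
    set Cq : ℝ := (1/2) * (∑ ℓ : Idx N m p, (dd ℓ)⁻¹ * (δv ℓ)^2)
        + (α/2) * ∑ i, ∑ j, (xs i j - x (k+1) i j)^2 with hCq
    have hCqnn : 0 ≤ Cq := by
      apply add_nonneg
      · apply mul_nonneg (by norm_num)
        exact Finset.sum_nonneg fun ℓ _ =>
          mul_nonneg (inv_nonneg.mpr (hddpos ℓ).le) (sq_nonneg _)
      · apply mul_nonneg (by positivity)
        exact Finset.sum_nonneg fun i _ => Finset.sum_nonneg fun j _ => sq_nonneg _
    apply le_of_forall_lam _ _ Cq hCqnn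
    intro l hl0 hl1
    set wl : ∀ i, Fin (d i) → ℝ := fun i jj => x (k+1) i jj + l * (xs i jj - x (k+1) i jj)
      with hwl
    have hwleq : ∀ i, wl i = (1 - l) • x (k+1) i + l • xs i := by
      intro i; funext jj
      simp only [hwl, Pi.add_apply, Pi.smul_apply, smul_eq_mul]
      ring
    have hwlX : ∀ i, wl i ∈ X i := by
      intro i
      rw [hwleq i]
      exact hXcv i (hxX k i) (hxsX i) (by linarith) (le_of_lt hl0) (by ring)
    have hmin := hxmin k wl hwlX
    rw [← hu, ← haa] at hmin
    -- convexity of F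
    have hFwl : F wl ≤ F (x (k+1)) + l * (F xs - F (x (k+1))) := by
      rw [hF wl, hF (x (k+1)), hF xs]
      have h1 : ∀ i : Fin N, f i (wl i) ≤ (1-l) * f i (x (k+1) i) + l * f i (xs i) := by
        intro i
        have h2 := (hf i).2 (Set.mem_univ (x (k+1) i)) (Set.mem_univ (xs i))
          (by linarith : (0:ℝ) ≤ 1 - l) (le_of_lt hl0) (by ring)
        rw [← hwleq i] at h2
        simpa [smul_eq_mul] using h2
      calc ∑ i, f i (wl i) ≤ ∑ i, ((1-l) * f i (x (k+1) i) + l * f i (xs i)) :=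
            Finset.sum_le_sum fun i _ => h1 i
        _ = (∑ i, f i (x (k+1) i)) + l * ((∑ i, f i (xs i)) - ∑ i, f i (x (k+1) i)) := by
            rw [Finset.sum_add_distrib, ← Finset.mul_sum, ← Finset.mul_sum]
            ring
    -- quadratic term bound, componentwise
    have hcomp : ∀ ℓ : Idx N m p, (projK ((A *ᵥ y k) - (Hhalf *ᵥ z k) + tg wl) ℓ)^2
        ≤ (aa ℓ)^2 + 2*(l * δv ℓ)*(aa ℓ) + (l * δv ℓ)^2 := by
      intro ℓ
      obtain ⟨i, j | j⟩ := ℓ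
      · have hrw : ((A *ᵥ y k) - (Hhalf *ᵥ z k) + tg wl) (i, Sum.inl j)
            = ((A *ᵥ y k) - (Hhalf *ᵥ z k)) (i, Sum.inl j) + g i (wl i) j := by
          rw [Pi.add_apply, htg1]
        have hg1 : g i (wl i) j ≤ (1-l) * g i (x (k+1) i) j + l * g i (xs i) j := by
          have h2 := (hg i j).2 (Set.mem_univ (x (k+1) i)) (Set.mem_univ (xs i))
            (by linarith : (0:ℝ) ≤ 1 - l) (le_of_lt hl0) (by ring)
          rw [← hwleq i] at h2
          simpa [smul_eq_mul] using h2
        have hut : u (i, Sum.inl j) = ((A *ᵥ y k) - (Hhalf *ᵥ z k)) (i, Sum.inl j)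
            + g i (x (k+1) i) j := by
          rw [hu, Pi.add_apply, htg1]
        have hδ : δv (i, Sum.inl j) = g i (xs i) j - g i (x (k+1) i) j := by
          rw [hδv]
          simp only [htg1]
        have hle : ((A *ᵥ y k) - (Hhalf *ᵥ z k) + tg wl) (i, Sum.inl j)
            ≤ u (i, Sum.inl j) + l * δv (i, Sum.inl j) := by
          rw [hrw, hut, hδ]
          nlinarith [hg1]
        have haaℓ : aa (i, Sum.inl j) = max (u (i, Sum.inl j)) 0 := rfl
        calc (projK ((A *ᵥ y k) - (Hhalf *ᵥ z k) + tg wl) (i, Sum.inl j))^2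
            = (max (((A *ᵥ y k) - (Hhalf *ᵥ z k) + tg wl) (i, Sum.inl j)) 0)^2 := rfl
          _ ≤ (max (u (i, Sum.inl j) + l * δv (i, Sum.inl j)) 0)^2 := by
              apply pow_le_pow_left₀ (le_max_right _ _) (max_le_max hle (le_refl (0:ℝ)))
          _ ≤ (max (u (i, Sum.inl j)) 0)^2 + 2*(l * δv (i, Sum.inl j))*(max (u (i, Sum.inl j)) 0)
              + (l * δv (i, Sum.inl j))^2 := sq_max_le _ _
          _ = (aa (i, Sum.inl j))^2 + 2*(l * δv (i, Sum.inl j))*(aa (i, Sum.inl j))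
              + (l * δv (i, Sum.inl j))^2 := by rw [haaℓ]
      · have hwli : wl i = x (k+1) i + l • (xs i - x (k+1) i) := by
          funext jj
          simp only [hwl, Pi.add_apply, Pi.smul_apply, Pi.sub_apply, smul_eq_mul]
        have hBwl : (B i *ᵥ wl i) j
            = (B i *ᵥ x (k+1) i) j + l * ((B i *ᵥ xs i) j - (B i *ᵥ x (k+1) i) j) := by
          rw [hwli, Matrix.mulVec_add, Matrix.mulVec_smul, Matrix.mulVec_sub]
          simp only [Pi.add_apply, Pi.smul_apply, Pi.sub_apply, smul_eq_mul]
        have hδ : δv (i, Sum.inr j) = (B i *ᵥ xs i + c i) j - (B i *ᵥ x (k+1) i + c i) j := by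
          rw [hδv]
          simp only [htg2]
        have hexp : ((A *ᵥ y k) - (Hhalf *ᵥ z k) + tg wl) (i, Sum.inr j)
            = u (i, Sum.inr j) + l * δv (i, Sum.inr j) := by
          rw [hu, hδ]
          simp only [Pi.add_apply, Pi.sub_apply, htg2]
          rw [hBwl]
          ring
        have haaℓ : aa (i, Sum.inr j) = u (i, Sum.inr j) := rfl
        have hpj : projK ((A *ᵥ y k) - (Hhalf *ᵥ z k) + tg wl) (i, Sum.inr j)
            = ((A *ᵥ y k) - (Hhalf *ᵥ z k) + tg wl) (i, Sum.inr j) := rfl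
        rw [hpj, hexp, haaℓ]
        apply le_of_eq
        ring
    -- summing the componentwise bound
    have hquadwl : quadForm D⁻¹ (projK ((A *ᵥ y k) - (Hhalf *ᵥ z k) + tg wl))
        ≤ quadForm D⁻¹ aa + l * (2 * ((y (k+1)) ⬝ᵥ δv))
          + l^2 * ∑ ℓ : Idx N m p, (dd ℓ)⁻¹ * (δv ℓ)^2 := by
      rw [hquadDinv, hquadDinv]
      have hsum1 : ∑ ℓ : Idx N m p, (dd ℓ)⁻¹ * (projK ((A *ᵥ y k) - (Hhalf *ᵥ z k) + tg wl) ℓ)^2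
          ≤ ∑ ℓ : Idx N m p, (dd ℓ)⁻¹ * ((aa ℓ)^2 + 2*(l * δv ℓ)*(aa ℓ) + (l * δv ℓ)^2) :=
        Finset.sum_le_sum fun ℓ _ =>
          mul_le_mul_of_nonneg_left (hcomp ℓ) (inv_nonneg.mpr (hddpos ℓ).le)
      have hsum2 : ∑ ℓ : Idx N m p, (dd ℓ)⁻¹ * ((aa ℓ)^2 + 2*(l * δv ℓ)*(aa ℓ) + (l * δv ℓ)^2)
          = (∑ ℓ : Idx N m p, (dd ℓ)⁻¹ * (aa ℓ)^2) + l * (2 * ((y (k+1)) ⬝ᵥ δv))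
            + l^2 * ∑ ℓ : Idx N m p, (dd ℓ)⁻¹ * (δv ℓ)^2 := by
        rw [show (y (k+1)) ⬝ᵥ δv = ∑ ℓ : Idx N m p, y (k+1) ℓ * δv ℓ from rfl]
        simp only [hyp]
        rw [Finset.mul_sum, Finset.mul_sum, Finset.mul_sum]
        rw [← Finset.sum_add_distrib, ← Finset.sum_add_distrib]
        apply Finset.sum_congr rfl
        intro ℓ _
        ring
      linarith [hsum1, hsum2]
    -- proximal term expansion
    have hprox : (∑ i, ∑ j, (wl i j - x k i j)^2)
        = (∑ i, ∑ j, (x (k+1) i j - x k i j)^2)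
          + l * (2 * ∑ i, ∑ j, (x (k+1) i j - x k i j) * (xs i j - x (k+1) i j))
          + l^2 * ∑ i, ∑ j, (xs i j - x (k+1) i j)^2 := by
      have h1 : ∀ (i : Fin N) (j : Fin (d i)), (wl i j - x k i j)^2
          = (x (k+1) i j - x k i j)^2
            + l * (2 * ((x (k+1) i j - x k i j) * (xs i j - x (k+1) i j)))
            + l^2 * (xs i j - x (k+1) i j)^2 := by
        intro i j
        simp only [hwl]
        ring
      calc (∑ i, ∑ j, (wl i j - x k i j)^2)
          = ∑ i, ∑ j, ((x (k+1) i j - x k i j)^2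
            + l * (2 * ((x (k+1) i j - x k i j) * (xs i j - x (k+1) i j)))
            + l^2 * (xs i j - x (k+1) i j)^2) := by
            exact Finset.sum_congr rfl fun i _ => Finset.sum_congr rfl fun j _ => h1 i j
        _ = (∑ i, ∑ j, (x (k+1) i j - x k i j)^2)
            + (∑ i, ∑ j, l * (2 * ((x (k+1) i j - x k i j) * (xs i j - x (k+1) i j))))
            + ∑ i, ∑ j, l^2 * (xs i j - x (k+1) i j)^2 := by
            simp only [Finset.sum_add_distrib]
        _ = (∑ i, ∑ j, (x (k+1) i j - x k i j)^2)
            + l * (2 * ∑ i, ∑ j, (x (k+1) i j - x k i j) * (xs i j - x (k+1) i j))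
            + l^2 * ∑ i, ∑ j, (xs i j - x (k+1) i j)^2 := by
            simp only [← Finset.mul_sum]
    -- assemble
    have h0 : 0 ≤ l * (F xs - F (x (k+1)))
        + (1/2) * (l * (2 * ((y (k+1)) ⬝ᵥ δv)))
        + (1/2) * (l^2 * ∑ ℓ : Idx N m p, (dd ℓ)⁻¹ * (δv ℓ)^2)
        + (α/2) * (l * (2 * ∑ i, ∑ j, (x (k+1) i j - x k i j) * (xs i j - x (k+1) i j)))
        + (α/2) * (l^2 * ∑ i, ∑ j, (xs i j - x (k+1) i j)^2) := by
      rw [hprox] at hmin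
      linarith [hmin, hFwl, hquadwl]
    have hgl : l * (F (x (k+1)) - F xs)
        ≤ l * ((y (k+1)) ⬝ᵥ δv
          + α * (∑ i, ∑ j, (x (k+1) i j - x k i j) * (xs i j - x (k+1) i j)) + l * Cq) := by
      calc l * (F (x (k+1)) - F xs) = -(l * (F xs - F (x (k+1)))) := by ring
        _ ≤ (1/2) * (l * (2 * ((y (k+1)) ⬝ᵥ δv)))
            + (1/2) * (l^2 * ∑ ℓ : Idx N m p, (dd ℓ)⁻¹ * (δv ℓ)^2)
            + (α/2) * (l * (2 * ∑ i, ∑ j, (x (k+1) i j - x k i j) * (xs i j - x (k+1) i j)))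
            + (α/2) * (l^2 * ∑ i, ∑ j, (xs i j - x (k+1) i j)^2) := by linarith [h0]
        _ = l * ((y (k+1)) ⬝ᵥ δv
            + α * (∑ i, ∑ j, (x (k+1) i j - x k i j) * (xs i j - x (k+1) i j)) + l * Cq) := by
            rw [hCq]
            ring
    exact (mul_le_mul_iff_right₀ hl0).mp hgl
  -- ===== Step 2 : matrix symmetry and Moore-Penrose facts =====
  have hHhalfT : Hhalfᵀ = Hhalf := psd_transpose_eq _ hHhalfpsd
  have hHtldT : Htldᵀ = Htld := by
    rw [← hHhalfsq, Matrix.transpose_mul, hHhalfT, hHhalfsq]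
  have hHtdagT : Htdagᵀ = Htdag := mp_symm _ _ hHtldT hHtdag
  have M2 : Hhalf * (Htdag * Htld) = Hhalf := mp_sandwich _ _ _ hHhalfsq hHhalfT hHtdag
  have M1 : (Htld * Htdag) * Hhalf = Hhalf := by
    have h := congrArg Matrix.transpose M2
    rw [Matrix.transpose_mul, Matrix.transpose_mul, hHtldT, hHtdagT, hHhalfT] at h
    exact h
  -- ===== Step 3 : block-constant vectors are in the kernel =====
  have hkerH : ∀ t : Blk m p → ℝ, Htld *ᵥ (fun ℓ : Idx N m p => t ℓ.2) = 0 := by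
    intro t
    funext ℓ
    rw [hHtld, kron_mulVec]
    have h1 : PHt *ᵥ (fun _ : Fin N => t ℓ.2) = 0 := (hPHtnull _).mpr ⟨t ℓ.2, rfl⟩
    have h2 := congrFun h1 ℓ.1
    simpa [Matrix.mulVec, dotProduct] using h2
  have hkerHhalf : ∀ v : Idx N m p → ℝ, Htld *ᵥ v = 0 → Hhalf *ᵥ v = 0 := by
    intro v hv
    have h1 : (Hhalf *ᵥ v) ⬝ᵥ (Hhalf *ᵥ v) = v ⬝ᵥ (Htld *ᵥ v) := by
      rw [mulVec_dot, hHhalfT, Matrix.mulVec_mulVec, hHhalfsq]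
    rw [hv] at h1
    simp only [dotProduct_zero] at h1
    exact dotProduct_self_eq_zero.mp h1
  have hkerHb : ∀ t : Blk m p → ℝ, Hhalf *ᵥ (fun ℓ : Idx N m p => t ℓ.2) = 0 :=
    fun t => hkerHhalf _ (hkerH t)
  -- ===== Step 4 : vstar = tg xs - c0 =====
  set c0 : Idx N m p → ℝ := fun ℓ => (∑ i', tg xs (i', ℓ.2)) / N with hc0
  have hQsym : (Hhalf * Hhalfdag)ᵀ = Hhalf * Hhalfdag := hHhalfdag.2.2.1
  have hvstar2 : vstar = (Hhalf * Hhalfdag) *ᵥ tg xs := by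
    rw [hvstar, hzstar, Matrix.mulVec_mulVec]
  have hQv : ∀ t : Blk m p → ℝ, (Hhalf * Hhalfdag) *ᵥ (fun ℓ : Idx N m p => t ℓ.2) = 0 := by
    intro t
    rw [← hQsym, Matrix.transpose_mul, ← Matrix.mulVec_mulVec, hHhalfT, hkerHb,
      Matrix.mulVec_zero]
  have hHQ : Hhalf * (Hhalf * Hhalfdag) = Hhalf := by
    calc Hhalf * (Hhalf * Hhalfdag) = ((Hhalf * Hhalfdag)ᵀ * Hhalfᵀ)ᵀ := by
          rw [Matrix.transpose_mul, Matrix.transpose_transpose, Matrix.transpose_transpose]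
      _ = (Hhalf * Hhalfdag * Hhalf)ᵀ := by rw [hQsym, hHhalfT]
      _ = Hhalfᵀ := by rw [hHhalfdag.1]
      _ = Hhalf := hHhalfT
  have hHhalfw : Hhalf *ᵥ (tg xs - vstar) = 0 := by
    rw [Matrix.mulVec_sub, hvstar2, Matrix.mulVec_mulVec, hHQ]
    exact sub_self _
  have hHtldw : Htld *ᵥ (tg xs - vstar) = 0 := by
    rw [← hHhalfsq, ← Matrix.mulVec_mulVec, hHhalfw, Matrix.mulVec_zero]
  have hconst : ∀ jb : Blk m p, ∃ t : ℝ,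
      (fun i => (tg xs - vstar) (i, jb)) = fun _ => t := by
    intro jb
    apply (hPHtnull _).mp
    funext i
    have h1 := congrFun hHtldw (i, jb)
    rw [hHtld, kron_mulVec] at h1
    simpa [Matrix.mulVec, dotProduct] using h1
  have hsumv : ∀ jb : Blk m p, ∑ i, vstar (i, jb) = 0 := by
    intro jb
    classical
    set onej : Idx N m p → ℝ := fun ℓ => if ℓ.2 = jb then 1 else 0 with honej
    have h1 : ∑ i, vstar (i, jb) = onej ⬝ᵥ vstar := by
      rw [show onej ⬝ᵥ vstar = ∑ ℓ : Idx N m p, onej ℓ * vstar ℓ from rfl]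
      rw [Fintype.sum_prod_type]
      rw [Finset.sum_comm]
      rw [Finset.sum_eq_single jb]
      · simp [honej]
      · intro b _ hb
        simp [honej, hb]
      · intro h; exact absurd (Finset.mem_univ jb) h
    rw [h1, hvstar2]
    rw [sym_dot _ hQsym]
    have hQvj : (Hhalf * Hhalfdag) *ᵥ onej = 0 :=
      hQv (fun j' => if j' = jb then (1:ℝ) else 0)
    rw [hQvj]
    simp
  have hwt : ∀ ℓ : Idx N m p, tg xs ℓ - vstar ℓ = c0 ℓ := by
    intro ℓ
    obtain ⟨i, jb⟩ := ℓ
    obtain ⟨t, ht⟩ := hconst jb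
    have hti : ∀ i' : Fin N, tg xs (i', jb) - vstar (i', jb) = t := by
      intro i'
      have h2 := congrFun ht i'
      simpa [Pi.sub_apply] using h2
    have h1 : ∑ i' : Fin N, (tg xs (i', jb) - vstar (i', jb)) = (N : ℝ) * t := by
      rw [Finset.sum_congr rfl (fun i' _ => hti i')]
      simp [Finset.sum_const, Finset.card_univ, mul_comm]
    have h2 : ∑ i' : Fin N, (tg xs (i', jb) - vstar (i', jb)) = ∑ i', tg xs (i', jb) := by
      rw [Finset.sum_sub_distrib, hsumv jb, sub_zero]
    have h3 : t = (∑ i', tg xs (i', jb)) / N := by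
      rw [eq_div_iff (ne_of_gt hNR)]
      rw [← h2, h1]
      ring
    rw [hti i, h3]
  have hGseq : tg xs = vstar + c0 := by
    funext ℓ
    have h1 := hwt ℓ
    simp only [Pi.add_apply]
    linarith
  have hc0inl : ∀ (i : Fin N) (j : Fin m), c0 (i, Sum.inl j) ≤ 0 := by
    intro i j
    show (∑ i', tg xs (i', Sum.inl j)) / N ≤ 0
    rw [Finset.sum_congr rfl (fun i' _ => htg1 xs i' j)]
    exact div_nonpos_of_nonpos_of_nonneg (hxsg j) hNR.le
  have hc0inr : ∀ (i : Fin N) (j : Fin p), c0 (i, Sum.inr j) = 0 := by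
    intro i j
    show (∑ i', tg xs (i', Sum.inr j)) / N = 0
    rw [Finset.sum_congr rfl (fun i' _ => htg2 xs i' j), hxsh j, zero_div]
  have hypc0 : y (k+1) ⬝ᵥ c0 ≤ 0 := by
    rw [show y (k+1) ⬝ᵥ c0 = ∑ ℓ : Idx N m p, y (k+1) ℓ * c0 ℓ from rfl]
    apply Finset.sum_nonpos
    intro ℓ _
    obtain ⟨i, j | j⟩ := ℓ
    · exact mul_nonpos_of_nonneg_of_nonpos (hypK i j) (hc0inl i j)
    · rw [hc0inr i j, mul_zero]
  -- ===== Step 5 : orthogonality of the projection residual =====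
  have hab : ∀ ℓ : Idx N m p, aa ℓ * (u ℓ - aa ℓ) = 0 := by
    intro ℓ
    obtain ⟨i, j | j⟩ := ℓ
    · show max (u (i, Sum.inl j)) 0 * (u (i, Sum.inl j) - max (u (i, Sum.inl j)) 0) = 0
      rcases le_total (u (i, Sum.inl j)) 0 with hc | hc
      · rw [max_eq_right hc, zero_mul]
      · rw [max_eq_left hc, sub_self, mul_zero]
    · show u (i, Sum.inr j) * (u (i, Sum.inr j) - u (i, Sum.inr j)) = 0
      rw [sub_self, mul_zero]
  have hypb : y (k+1) ⬝ᵥ (u - aa) = 0 := by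
    rw [show y (k+1) ⬝ᵥ (u - aa) = ∑ ℓ : Idx N m p, y (k+1) ℓ * (u ℓ - aa ℓ) from rfl]
    apply Finset.sum_eq_zero
    intro ℓ _
    simp only [hyp]
    rw [mul_assoc, hab ℓ, mul_zero]
  -- ===== Step 6 : the main dot-product identity =====
  have hQDyp : quadForm D (y (k+1)) = y (k+1) ⬝ᵥ aa := by
    unfold quadForm
    rw [hDyp]
  have hGpeq : tg (x (k+1)) = u - ((A *ᵥ y k) - (Hhalf *ᵥ z k)) := by
    rw [hu]
    abel
  have hdotid : y (k+1) ⬝ᵥ (fun ℓ => tg xs ℓ - tg (x (k+1)) ℓ)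
        + y (k+1) ⬝ᵥ ((Hhalf *ᵥ z k) - vstar)
      = y (k+1) ⬝ᵥ c0 - y (k+1) ⬝ᵥ (u - aa) - quadForm D (y (k+1))
        + y (k+1) ⬝ᵥ (A *ᵥ y k) := by
    have hfun : (fun ℓ => tg xs ℓ - tg (x (k+1)) ℓ) = tg xs - tg (x (k+1)) := rfl
    rw [hfun, hQDyp, hGseq, hGpeq]
    simp only [dotProduct_sub, dotProduct_add]
    ring
  -- ===== Step 7 : quadratic form decompositions =====
  have hAsym : Aᵀ = A := by rw [hA, kron_transpose, psd_transpose_eq PA hPA]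
  have hQAsub : quadForm A (y (k+1) - y k)
      = quadForm A (y (k+1)) - 2 * (y (k+1) ⬝ᵥ (A *ᵥ y k)) + quadForm A (y k) := by
    unfold quadForm
    rw [Matrix.mulVec_sub, dotProduct_sub, sub_dotProduct, sub_dotProduct]
    rw [sym_dot A hAsym (y k) (y (k+1))]
    ring
  have hQAnn : 0 ≤ quadForm A (y (k+1) - y k) := by
    rw [hA]; exact kron_quad_nonneg PA hPA _
  have hQH : 0 ≤ quadForm (PH ⊗ₖ (1 : Matrix (Blk m p) (Blk m p) ℝ)) (y (k+1)) :=
    kron_quad_nonneg PH hPH _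
  have hQD : quadForm D (y (k+1)) = quadForm A (y (k+1))
      + ρ * quadForm (PH ⊗ₖ (1 : Matrix (Blk m p) (Blk m p) ℝ)) (y (k+1)) := by
    unfold quadForm
    rw [hD, Matrix.add_mulVec, Matrix.smul_mulVec, dotProduct_add, dotProduct_smul,
      smul_eq_mul]
  have hQsubHT : quadForm ((PH - PHt) ⊗ₖ (1 : Matrix (Blk m p) (Blk m p) ℝ)) (y (k+1))
      = quadForm (PH ⊗ₖ (1 : Matrix (Blk m p) (Blk m p) ℝ)) (y (k+1))
        - quadForm Htld (y (k+1)) := by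
    rw [hHtld, kron_quad, kron_quad, kron_quad, ← Finset.sum_sub_distrib]
    apply Finset.sum_congr rfl
    intro j _
    unfold quadForm
    rw [Matrix.sub_mulVec, dotProduct_sub]
  have hQsubnn : 0 ≤ quadForm ((PH - PHt) ⊗ₖ (1 : Matrix (Blk m p) (Blk m p) ℝ)) (y (k+1)) :=
    kron_quad_nonneg _ hHHt _
  -- ===== Step 8 : the dual quadratic difference =====
  have he' : (Hhalf *ᵥ z (k+1)) - vstar = ((Hhalf *ᵥ z k) - vstar) + ρ • (Htld *ᵥ y (k+1)) := by
    rw [hzupd k, Matrix.mulVec_add, Matrix.mulVec_smul, Matrix.mulVec_mulVec, hHhalfsq]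
    abel
  have hee : (Hhalf *ᵥ z k) - vstar = Hhalf *ᵥ (z k - zstar) := by
    rw [Matrix.mulVec_sub, hvstar]
  have hcross1 : (Htld *ᵥ y (k+1)) ⬝ᵥ (Htdag *ᵥ ((Hhalf *ᵥ z k) - vstar))
      = y (k+1) ⬝ᵥ ((Hhalf *ᵥ z k) - vstar) := by
    rw [hee, mulVec_dot, hHtldT, Matrix.mulVec_mulVec, Matrix.mulVec_mulVec, M1]
  have hcross2 : ((Hhalf *ᵥ z k) - vstar) ⬝ᵥ (Htdag *ᵥ (Htld *ᵥ y (k+1)))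
      = y (k+1) ⬝ᵥ ((Hhalf *ᵥ z k) - vstar) := by
    rw [hee, mulVec_dot, hHhalfT, Matrix.mulVec_mulVec, Matrix.mulVec_mulVec,
      Matrix.mul_assoc, M2]
    exact sym_dot Hhalf hHhalfT _ _
  have hmm3 : (Htld *ᵥ y (k+1)) ⬝ᵥ (Htdag *ᵥ (Htld *ᵥ y (k+1)))
      = y (k+1) ⬝ᵥ (Htld *ᵥ y (k+1)) := by
    rw [mulVec_dot, hHtldT, Matrix.mulVec_mulVec, Matrix.mulVec_mulVec, hHtdag.1]
  have hQdiff : quadForm Htdag ((Hhalf *ᵥ z k) - vstar)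
        - quadForm Htdag ((Hhalf *ᵥ z (k+1)) - vstar)
      = -(2*ρ) * (y (k+1) ⬝ᵥ ((Hhalf *ᵥ z k) - vstar))
        - ρ^2 * quadForm Htld (y (k+1)) := by
    rw [he']
    unfold quadForm
    simp only [Matrix.mulVec_add, Matrix.mulVec_smul, dotProduct_add, add_dotProduct,
      dotProduct_smul, smul_dotProduct, smul_eq_mul]
    rw [hcross1, hcross2, hmm3]
    ring
  -- ===== Step 9 : the dual-side inequality =====
  have hstep3 : y (k+1) ⬝ᵥ (fun ℓ => tg xs ℓ - tg (x (k+1)) ℓ)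
      ≤ (1/(2*ρ)) * (quadForm Htdag ((Hhalf *ᵥ z k) - vstar)
          - quadForm Htdag ((Hhalf *ᵥ z (k+1)) - vstar))
        + (1/2) * (quadForm A (y k) - quadForm A (y (k+1))) := by
    have h1 : y (k+1) ⬝ᵥ (fun ℓ => tg xs ℓ - tg (x (k+1)) ℓ)
        ≤ - (y (k+1) ⬝ᵥ ((Hhalf *ᵥ z k) - vstar)) - quadForm D (y (k+1))
          + y (k+1) ⬝ᵥ (A *ᵥ y k) := by
      linarith [hdotid, hypc0, hypb]
    have h2 : (1/(2*ρ)) * (quadForm Htdag ((Hhalf *ᵥ z k) - vstar)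
          - quadForm Htdag ((Hhalf *ᵥ z (k+1)) - vstar))
        = - (y (k+1) ⬝ᵥ ((Hhalf *ᵥ z k) - vstar))
          - (ρ/2) * quadForm Htld (y (k+1)) := by
      rw [hQdiff]
      field_simp
    rw [h2]
    have hd1 : 0 ≤ ρ * quadForm (PH ⊗ₖ (1 : Matrix (Blk m p) (Blk m p) ℝ)) (y (k+1)) :=
      mul_nonneg hρ.le hQH
    have hd2 : 0 ≤ ρ * (quadForm (PH ⊗ₖ (1 : Matrix (Blk m p) (Blk m p) ℝ)) (y (k+1))
        - quadForm Htld (y (k+1))) := by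
      apply mul_nonneg hρ.le
      rw [← hQsubHT]
      exact hQsubnn
    linarith [hQAsub, hQAnn, hQD, h1]
  -- ===== Step 10 : the proximal-term algebra =====
  have hIPx : 2 * ∑ i, ∑ j, (x (k+1) i j - x k i j) * (xs i j - x (k+1) i j)
      = (∑ i, ∑ j, (x k i j - xs i j)^2) - (∑ i, ∑ j, (x (k+1) i j - xs i j)^2)
        - ∑ i, ∑ j, (x (k+1) i j - x k i j)^2 := by
    have h1 : ∀ (i : Fin N) (j : Fin (d i)),
        2 * ((x (k+1) i j - x k i j) * (xs i j - x (k+1) i j))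
          = (x k i j - xs i j)^2 - (x (k+1) i j - xs i j)^2 - (x (k+1) i j - x k i j)^2 := by
      intro i j
      ring
    calc 2 * ∑ i, ∑ j, (x (k+1) i j - x k i j) * (xs i j - x (k+1) i j)
        = ∑ i, ∑ j, 2 * ((x (k+1) i j - x k i j) * (xs i j - x (k+1) i j)) := by
          simp only [← Finset.mul_sum]
      _ = ∑ i, ∑ j, ((x k i j - xs i j)^2 - (x (k+1) i j - xs i j)^2
          - (x (k+1) i j - x k i j)^2) :=
          Finset.sum_congr rfl fun i _ => Finset.sum_congr rfl fun j _ => h1 i j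
      _ = (∑ i, ∑ j, (x k i j - xs i j)^2) - (∑ i, ∑ j, (x (k+1) i j - xs i j)^2)
          - ∑ i, ∑ j, (x (k+1) i j - x k i j)^2 := by
          simp only [Finset.sum_sub_distrib]
  have hSpk : 0 ≤ ∑ i, ∑ j, (x (k+1) i j - x k i j)^2 :=
    Finset.sum_nonneg fun i _ => Finset.sum_nonneg fun j _ => sq_nonneg _
  have h9 : α * ∑ i, ∑ j, (x (k+1) i j - x k i j) * (xs i j - x (k+1) i j)
      ≤ (α/2) * ((∑ i, ∑ j, (x k i j - xs i j)^2) - ∑ i, ∑ j, (x (k+1) i j - xs i j)^2) := by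
    have h8 : α * ∑ i, ∑ j, (x (k+1) i j - x k i j) * (xs i j - x (k+1) i j)
        = (α/2) * (((∑ i, ∑ j, (x k i j - xs i j)^2) - ∑ i, ∑ j, (x (k+1) i j - xs i j)^2)
          - ∑ i, ∑ j, (x (k+1) i j - x k i j)^2) := by
      rw [show (((∑ i, ∑ j, (x k i j - xs i j)^2) - ∑ i, ∑ j, (x (k+1) i j - xs i j)^2)
          - ∑ i, ∑ j, (x (k+1) i j - x k i j)^2)
          = 2 * ∑ i, ∑ j, (x (k+1) i j - x k i j) * (xs i j - x (k+1) i j) by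
        rw [hIPx]]
      ring
    rw [h8, mul_sub]
    have h10 : 0 ≤ (α/2) * ∑ i, ∑ j, (x (k+1) i j - x k i j)^2 :=
      mul_nonneg (by positivity) hSpk
    linarith
  linarith [hVI, hstep3, h9]
end

section
/- (Lemma: boundedness of Pro-DUCA dual iterates) Suppose the problem setup and the saddle point hypotheses hold, and the sequences (x^k)_{k≥0}, (y^k)_{k≥0}, (z^k)_{k≥0} are generated by Pro-DUCA. Then for every k ≥ 1: ‖y^k‖_A ≤ C_1 + C_2, where C_1 := √(N·λ_1(P_A))·‖y°‖ and C_2 := ((‖y^0‖_A + C_1)² + α‖x^0 − x*‖² + (1/ρ)·(v^0 − v*)ᵀH̃†(v^0 − v*))^{1/2}. -/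
open Matrix
open scoped Kronecker

/-! ### Auxiliary lemmas -/

section AuxGen
variable {n : Type*} [Fintype n]

lemma aux_mulVec_dot_symm (M : Matrix n n ℝ) (h : Mᵀ = M) (a b : n → ℝ) :
    (M *ᵥ a) ⬝ᵥ b = a ⬝ᵥ (M *ᵥ b) := by
  have h1 : M *ᵥ a = a ᵥ* M := by
    conv_lhs => rw [← h, Matrix.mulVec_transpose]
  rw [h1, ← dotProduct_mulVec]

lemma aux_dot_mulVec_symm (M : Matrix n n ℝ) (h : Mᵀ = M) (u v : n → ℝ) :
    u ⬝ᵥ M *ᵥ v = v ⬝ᵥ M *ᵥ u := by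
  rw [← aux_mulVec_dot_symm M h u v, dotProduct_comm]

lemma aux_psd_cs (M : Matrix n n ℝ) (hsym : Mᵀ = M)
    (hpsd : ∀ w : n → ℝ, 0 ≤ w ⬝ᵥ M *ᵥ w) (u v : n → ℝ) :
    u ⬝ᵥ M *ᵥ v ≤ Real.sqrt (u ⬝ᵥ M *ᵥ u) * Real.sqrt (v ⬝ᵥ M *ᵥ v) := by
  set qu := u ⬝ᵥ M *ᵥ u with hqu'
  set qv := v ⬝ᵥ M *ᵥ v with hqv'
  set c := u ⬝ᵥ M *ᵥ v with hc'
  have hqu : 0 ≤ qu := hpsd u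
  have hqv : 0 ≤ qv := hpsd v
  have key : ∀ s t : ℝ, 0 ≤ s^2*qu - 2*s*t*c + t^2*qv := by
    intro s t
    have h0 := hpsd (s • u - t • v)
    have hsymuv := aux_dot_mulVec_symm M hsym v u
    have expand : (s • u - t • v) ⬝ᵥ M *ᵥ (s • u - t • v) = s^2*qu - 2*s*t*c + t^2*qv := by
      simp only [Matrix.mulVec_sub, Matrix.mulVec_smul, sub_dotProduct,
        dotProduct_sub, smul_dotProduct, dotProduct_smul, smul_eq_mul]
      rw [hsymuv, ← hqu', ← hqv', ← hc']
      ring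
    linarith [expand ▸ h0]
  set a := Real.sqrt qu with ha'
  set b := Real.sqrt qv with hb'
  have ha2 : a^2 = qu := Real.sq_sqrt hqu
  have hb2 : b^2 = qv := Real.sq_sqrt hqv
  have ha0 : 0 ≤ a := Real.sqrt_nonneg _
  have hb0 : 0 ≤ b := Real.sqrt_nonneg _
  rcases eq_or_lt_of_le hqu with h | h
  · have hA : a = 0 := by rw [ha', ← h, Real.sqrt_zero]
    rw [hA, zero_mul]
    by_contra hcpos
    push_neg at hcpos
    have hk := key ((qv+1)/(2*c)) 1
    have hne : c ≠ 0 := ne_of_gt hcpos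
    rw [← h] at hk
    have h2 : 2*((qv+1)/(2*c))*1*c = qv + 1 := by field_simp
    nlinarith
  · rcases eq_or_lt_of_le hqv with h2 | h2
    · have hB : b = 0 := by rw [hb', ← h2, Real.sqrt_zero]
      rw [hB, mul_zero]
      by_contra hcpos
      push_neg at hcpos
      have hk := key 1 ((qu+1)/(2*c))
      have hne : c ≠ 0 := ne_of_gt hcpos
      have h3 : 2*1*((qu+1)/(2*c))*c = qu + 1 := by field_simp
      rw [← h2] at hk
      nlinarith
    · have hA : 0 < a := Real.sqrt_pos.mpr h
      have hB : 0 < b := Real.sqrt_pos.mpr h2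
      have habpos : 0 < a * b := mul_pos hA hB
      have h' : a*b*c ≤ a*b*(a*b) := by nlinarith [key b a]
      exact le_of_mul_le_mul_left h' habpos

lemma aux_psd_quad_sub_le (M : Matrix n n ℝ) (hsym : Mᵀ = M)
    (hpsd : ∀ w : n → ℝ, 0 ≤ w ⬝ᵥ M *ᵥ w) (u v : n → ℝ) :
    (u - v) ⬝ᵥ M *ᵥ (u - v)
      ≤ (Real.sqrt (u ⬝ᵥ M *ᵥ u) + Real.sqrt (v ⬝ᵥ M *ᵥ v))^2 := by
  have hcs := aux_psd_cs M hsym hpsd u (-v)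
  have hneg : (-v) ⬝ᵥ M *ᵥ (-v) = v ⬝ᵥ M *ᵥ v := by
    rw [Matrix.mulVec_neg, dotProduct_neg, neg_dotProduct, neg_neg]
  rw [hneg] at hcs
  have hmv : u ⬝ᵥ M *ᵥ (-v) = -(u ⬝ᵥ M *ᵥ v) := by
    rw [Matrix.mulVec_neg, dotProduct_neg]
  rw [hmv] at hcs
  have hsymuv := aux_dot_mulVec_symm M hsym v u
  have expand : (u - v) ⬝ᵥ M *ᵥ (u - v)
      = (u ⬝ᵥ M *ᵥ u - u ⬝ᵥ M *ᵥ v) - (v ⬝ᵥ M *ᵥ u - v ⬝ᵥ M *ᵥ v) := by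
    simp only [Matrix.mulVec_sub, sub_dotProduct, dotProduct_sub]
    rw [hsymuv]
  have ha2 : (Real.sqrt (u ⬝ᵥ M *ᵥ u))^2 = u ⬝ᵥ M *ᵥ u := Real.sq_sqrt (hpsd u)
  have hb2 : (Real.sqrt (v ⬝ᵥ M *ᵥ v))^2 = v ⬝ᵥ M *ᵥ v := Real.sq_sqrt (hpsd v)
  nlinarith [hcs, expand, hsymuv]

lemma aux_psd_sqrt_quad_add (M : Matrix n n ℝ) (hsym : Mᵀ = M)
    (hpsd : ∀ w : n → ℝ, 0 ≤ w ⬝ᵥ M *ᵥ w) (u v : n → ℝ) :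
    Real.sqrt ((u + v) ⬝ᵥ M *ᵥ (u + v))
      ≤ Real.sqrt (u ⬝ᵥ M *ᵥ u) + Real.sqrt (v ⬝ᵥ M *ᵥ v) := by
  have h := aux_psd_quad_sub_le M hsym hpsd u (-v)
  have hneg : (-v) ⬝ᵥ M *ᵥ (-v) = v ⬝ᵥ M *ᵥ v := by
    rw [Matrix.mulVec_neg, dotProduct_neg, neg_dotProduct, neg_neg]
  rw [sub_neg_eq_add, hneg] at h
  calc Real.sqrt ((u + v) ⬝ᵥ M *ᵥ (u + v))
      ≤ Real.sqrt ((Real.sqrt (u ⬝ᵥ M *ᵥ u) + Real.sqrt (v ⬝ᵥ M *ᵥ v))^2) :=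
        Real.sqrt_le_sqrt h
    _ = _ := Real.sqrt_sq (by positivity)

lemma aux_polar_identity (M : Matrix n n ℝ) (hsym : Mᵀ = M) (u v : n → ℝ) :
    u ⬝ᵥ (M *ᵥ (u - v))
      = (u ⬝ᵥ M *ᵥ u - v ⬝ᵥ M *ᵥ v + (u - v) ⬝ᵥ M *ᵥ (u - v)) / 2 := by
  have hsymuv := aux_dot_mulVec_symm M hsym v u
  have e1 : (u - v) ⬝ᵥ M *ᵥ (u - v)
      = (u ⬝ᵥ M *ᵥ u - u ⬝ᵥ M *ᵥ v) - (v ⬝ᵥ M *ᵥ u - v ⬝ᵥ M *ᵥ v) := by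
    simp only [Matrix.mulVec_sub, sub_dotProduct, dotProduct_sub]
    rw [hsymuv]
  have e2 : u ⬝ᵥ (M *ᵥ (u - v)) = u ⬝ᵥ M *ᵥ u - u ⬝ᵥ M *ᵥ v := by
    simp only [Matrix.mulVec_sub, dotProduct_sub]
  rw [e2, e1, hsymuv]; ring

lemma aux_herm_symm (M : Matrix n n ℝ) (h : M.IsHermitian) : Mᵀ = M := by
  rw [← Matrix.conjTranspose_eq_transpose_of_trivial]; exact h

end AuxGen

lemma aux_sq_max_le (q : ℝ) : (max q 0)^2 ≤ q^2 := by
  rcases le_total q 0 with h | h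
  · rw [max_eq_right h]; simpa using sq_nonneg q
  · rw [max_eq_left h]

lemma aux_le_zero_of_forall_t {G M : ℝ} (hM : 0 ≤ M)
    (h : ∀ t : ℝ, 0 < t → t ≤ 1 → G ≤ t * M) : G ≤ 0 := by
  by_contra hG
  push_neg at hG
  rcases eq_or_lt_of_le hM with hM0 | hM0
  · have := h 1 one_pos le_rfl
    rw [← hM0, mul_zero] at this
    linarith
  · have ht : 0 < min 1 (G / (2*M)) := lt_min one_pos (div_pos hG (by linarith))
    have h1 := h _ ht (min_le_left _ _)
    have h2 : min 1 (G/(2*M)) * M ≤ (G/(2*M))*M :=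
      mul_le_mul_of_nonneg_right (min_le_right _ _) hM
    have h3 : (G/(2*M))*M = G/2 := by field_simp
    linarith

section AuxMP
variable {n : Type*} [Fintype n] [DecidableEq n]

lemma aux_mp_mul_self (M Md : Matrix n n ℝ) (hM : Mᵀ = M) (h : IsMPInv M Md) :
    M * (M * Md) = M := by
  obtain ⟨h1, h2, h3, h4⟩ := h
  have step1 : M * (M * Md) = M * Mdᵀ * M := by
    conv_lhs => rw [← h3]
    rw [Matrix.transpose_mul, hM]
    simp only [Matrix.mul_assoc]
  have step2 : M * Mdᵀ * M = (Mᵀ * Md * Mᵀ)ᵀ := by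
    simp only [Matrix.transpose_mul, Matrix.transpose_transpose]
    simp only [Matrix.mul_assoc]
  rw [step1, step2, hM, h1, hM]

lemma aux_mpinv_symm (M Md : Matrix n n ℝ) (hM : Mᵀ = M) (h : IsMPInv M Md) :
    Mdᵀ = Md := by
  obtain ⟨h1, h2, h3, h4⟩ := h
  have hc1 : M * Mdᵀ * M = M := by
    have e : M * Mdᵀ * M = (Mᵀ * Md * Mᵀ)ᵀ := by
      simp only [Matrix.transpose_mul, Matrix.transpose_transpose]
      simp only [Matrix.mul_assoc]
    rw [e, hM, h1, hM]
  have hc3 : (M * Mdᵀ)ᵀ = M * Mdᵀ := by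
    rw [Matrix.transpose_mul, Matrix.transpose_transpose]
    calc Md * Mᵀ = Md * M := by rw [hM]
      _ = (Md * M)ᵀ := by rw [h4]
      _ = Mᵀ * Mdᵀ := by rw [Matrix.transpose_mul]
      _ = M * Mdᵀ := by rw [hM]
  have hc4 : (Mdᵀ * M)ᵀ = Mdᵀ * M := by
    rw [Matrix.transpose_mul, Matrix.transpose_transpose]
    calc Mᵀ * Md = M * Md := by rw [hM]
      _ = (M * Md)ᵀ := by rw [h3]
      _ = Mdᵀ * Mᵀ := by rw [Matrix.transpose_mul]
      _ = Mdᵀ * M := by rw [hM]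
  have hc2 : Mdᵀ * M * Mdᵀ = Mdᵀ := by
    have ht : (Mdᵀ * M * Mdᵀ)ᵀ = Md := by
      simp only [Matrix.transpose_mul, Matrix.transpose_transpose, hM]
      rw [← Matrix.mul_assoc, h2]
    calc Mdᵀ * M * Mdᵀ = ((Mdᵀ * M * Mdᵀ)ᵀ)ᵀ := by rw [Matrix.transpose_transpose]
      _ = Mdᵀ := by rw [ht]
  have hMB : M * Md = M * Mdᵀ := by
    calc M * Md = (M * Md)ᵀ := by rw [h3]
      _ = Mdᵀ * Mᵀ := by rw [Matrix.transpose_mul]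
      _ = Mdᵀ * (M * Mdᵀ * M)ᵀ := by rw [hc1]
      _ = Mdᵀ * (Mᵀ * (M * Mdᵀ)ᵀ) := by rw [Matrix.transpose_mul]
      _ = Mdᵀ * (Mᵀ * (M * Mdᵀ)) := by rw [hc3]
      _ = (Mdᵀ * Mᵀ) * (M * Mdᵀ) := by simp only [Matrix.mul_assoc]
      _ = (M * Md)ᵀ * (M * Mdᵀ) := by rw [Matrix.transpose_mul]
      _ = (M * Md) * (M * Mdᵀ) := by rw [h3]
      _ = (M * Md * M) * Mdᵀ := by simp only [Matrix.mul_assoc]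
      _ = M * Mdᵀ := by rw [h1]
  have hBM : Md * M = Mdᵀ * M := by
    calc Md * M = (Md * M)ᵀ := by rw [h4]
      _ = Mᵀ * Mdᵀ := by rw [Matrix.transpose_mul]
      _ = (M * Mdᵀ * M)ᵀ * Mdᵀ := by rw [hc1]
      _ = (Mᵀ * (Mdᵀᵀ * Mᵀ)) * Mdᵀ := by
          rw [Matrix.transpose_mul, Matrix.transpose_mul]
      _ = ((Mdᵀ * M)ᵀ * Mᵀ) * Mdᵀ := by
          rw [Matrix.transpose_mul, Matrix.transpose_transpose]
          simp only [Matrix.mul_assoc]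
      _ = ((Mdᵀ * M) * Mᵀ) * Mdᵀ := by rw [hc4]
      _ = (Mdᵀ * M) * (Mᵀ * Mdᵀ) := by simp only [Matrix.mul_assoc]
      _ = (Mdᵀ * M) * (Md * M)ᵀ := by rw [Matrix.transpose_mul]
      _ = (Mdᵀ * M) * (Md * M) := by rw [h4]
      _ = Mdᵀ * (M * Md * M) := by simp only [Matrix.mul_assoc]
      _ = Mdᵀ * M := by rw [h1]
  calc Mdᵀ = Mdᵀ * M * Mdᵀ := hc2.symm
    _ = (Md * M) * Mdᵀ := by rw [hBM]
    _ = Md * (M * Mdᵀ) := by simp only [Matrix.mul_assoc]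
    _ = Md * (M * Md) := by rw [hMB]
    _ = Md * M * Md := by simp only [Matrix.mul_assoc]
    _ = Md := h2

end AuxMP

lemma aux_rayleigh_le_lam1 {n : Type*} [Fintype n] [DecidableEq n]
    (P : Matrix n n ℝ) (hP : P.IsHermitian) (lam1 : ℝ)
    (hmax : ∀ (μ : ℝ) (v : n → ℝ), v ≠ 0 → P *ᵥ v = μ • v → μ ≤ lam1) (u : n → ℝ) :
    u ⬝ᵥ P *ᵥ u ≤ lam1 * (u ⬝ᵥ u) := by
  classical
  have hofReal : ∀ x : ℝ, (RCLike.ofReal x : ℝ) = x := fun x => congrFun RCLike.ofReal_real_eq_id x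
  set V : Matrix n n ℝ := (hP.eigenvectorUnitary : Matrix n n ℝ) with hV
  have hstar : star V = Vᵀ := by
    rw [Matrix.star_eq_conjTranspose, Matrix.conjTranspose_eq_transpose_of_trivial]
  have hVV : V * Vᵀ = 1 := by
    rw [← hstar]
    exact Matrix.mem_unitaryGroup_iff.mp hP.eigenvectorUnitary.2
  set w : n → ℝ := Vᵀ *ᵥ u with hw
  have hdotVz : ∀ z : n → ℝ, u ⬝ᵥ (V *ᵥ z) = w ⬝ᵥ z := by
    intro z
    rw [dotProduct_mulVec, hw, Matrix.mulVec_transpose]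
  have hVw : V *ᵥ w = u := by rw [hw, Matrix.mulVec_mulVec, hVV, Matrix.one_mulVec]
  have h2 : u ⬝ᵥ u = ∑ i, (w i)^2 := by
    have e : w ⬝ᵥ w = u ⬝ᵥ u := by
      calc w ⬝ᵥ w = u ⬝ᵥ (V *ᵥ w) := (hdotVz w).symm
        _ = u ⬝ᵥ u := by rw [hVw]
    rw [← e, dotProduct]
    exact Finset.sum_congr rfl fun i _ => by ring
  have h1 : u ⬝ᵥ P *ᵥ u = ∑ i, hP.eigenvalues i * (w i)^2 := by
    conv_lhs => rw [hP.spectral_theorem, Unitary.conjStarAlgAut_apply]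
    rw [← Matrix.mulVec_mulVec, ← Matrix.mulVec_mulVec, hstar, ← hw, hdotVz]
    simp only [dotProduct, Matrix.mulVec_diagonal, Function.comp_apply, hofReal]
    exact Finset.sum_congr rfl fun i _ => by ring
  have hlam_le : ∀ i, hP.eigenvalues i ≤ lam1 := by
    intro i
    refine hmax _ _ ?_ (hP.mulVec_eigenvectorBasis i)
    intro h0
    have h1' : ‖hP.eigenvectorBasis i‖ = 1 := hP.eigenvectorBasis.orthonormal.1 i
    have : hP.eigenvectorBasis i = 0 := by
      apply PiLp.ext; intro j; exact congrFun h0 j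
    rw [this] at h1'; simp at h1'
  rw [h1, h2, Finset.mul_sum]
  exact Finset.sum_le_sum fun i _ =>
    mul_le_mul_of_nonneg_right (hlam_le i) (sq_nonneg _)

section AuxKron
variable {N m p : ℕ}

lemma aux_idx_sum (G : Idx N m p → ℝ) :
    ∑ j, G j = ∑ i : Fin N, ((∑ a : Fin m, G (i, Sum.inl a)) + ∑ b : Fin p, G (i, Sum.inr b)) := by
  rw [Fintype.sum_prod_type]
  exact Finset.sum_congr rfl fun i _ => Fintype.sum_sum_type _

lemma aux_projK_inl (v : Idx N m p → ℝ) (i : Fin N) (a : Fin m) :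
    projK v (i, Sum.inl a) = max (v (i, Sum.inl a)) 0 := rfl

lemma aux_projK_inr (v : Idx N m p → ℝ) (i : Fin N) (b : Fin p) :
    projK v (i, Sum.inr b) = v (i, Sum.inr b) := rfl

lemma aux_kron_one_mulVec (P : Matrix (Fin N) (Fin N) ℝ) (u : Idx N m p → ℝ) (i : Fin N) (b : Blk m p) :
    ((P ⊗ₖ (1 : Matrix (Blk m p) (Blk m p) ℝ)) *ᵥ u) (i, b) = ∑ j, P i j * u (j, b) := by
  simp only [Matrix.mulVec, dotProduct, Fintype.sum_prod_type, kroneckerMap_apply,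
    Matrix.one_apply]
  refine Finset.sum_congr rfl fun j _ => ?_
  simp [mul_ite, ite_mul, Finset.sum_ite_eq]

lemma aux_kron_one_quad (P : Matrix (Fin N) (Fin N) ℝ) (u : Idx N m p → ℝ) :
    u ⬝ᵥ ((P ⊗ₖ (1 : Matrix (Blk m p) (Blk m p) ℝ)) *ᵥ u)
      = ∑ b : Blk m p, (fun i => u (i, b)) ⬝ᵥ (P *ᵥ fun i => u (i, b)) := by
  rw [dotProduct, Fintype.sum_prod_type, Finset.sum_comm]
  refine Finset.sum_congr rfl fun b _ => ?_
  refine Finset.sum_congr rfl fun i _ => ?_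
  rw [aux_kron_one_mulVec]
  rfl

lemma aux_kron_one_quad_nonneg {P : Matrix (Fin N) (Fin N) ℝ} (hP : P.PosSemidef) (u : Idx N m p → ℝ) :
    0 ≤ u ⬝ᵥ ((P ⊗ₖ (1 : Matrix (Blk m p) (Blk m p) ℝ)) *ᵥ u) := by
  rw [aux_kron_one_quad]
  exact Finset.sum_nonneg fun b _ => by simpa using hP.dotProduct_mulVec_nonneg (fun i => u (i, b))

end AuxKron

lemma aux_proj_quad_bound (e sj rr t dvi Ypi : ℝ) (hdvi : 0 < dvi)
    (hM : max sj 0 = dvi * Ypi) (he : e ≤ sj + t * rr) :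
    dvi⁻¹ * (max e 0)^2 ≤ dvi⁻¹ * (max sj 0)^2 + 2*t*(Ypi*rr) + t^2*(dvi⁻¹ * rr^2) := by
  have h1 : max e 0 ≤ max (sj + t*rr) 0 := max_le_max he le_rfl
  have h2 : max (sj + t*rr) 0 ≤ max (max sj 0 + t*rr) 0 :=
    max_le_max (add_le_add_left (le_max_left _ _) _) le_rfl
  have h3 : (max e 0)^2 ≤ (max sj 0 + t*rr)^2 := by
    calc (max e 0)^2 ≤ (max (max sj 0 + t*rr) 0)^2 :=
        pow_le_pow_left₀ (le_max_right _ _) (h1.trans h2) 2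
      _ ≤ (max sj 0 + t*rr)^2 := aux_sq_max_le _
  have h4 : dvi⁻¹ * (max e 0)^2 ≤ dvi⁻¹ * (max sj 0 + t*rr)^2 :=
    mul_le_mul_of_nonneg_left h3 (inv_nonneg.mpr hdvi.le)
  have h5 : dvi⁻¹ * (max sj 0 + t*rr)^2
      = dvi⁻¹ * (max sj 0)^2 + 2*t*(Ypi*rr) + t^2*(dvi⁻¹ * rr^2) := by
    rw [hM]
    field_simp
    ring
  linarith

lemma aux_proj_quad_bound_inr (sj rr t dvi Ypi : ℝ) (hdvi : 0 < dvi)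
    (hM : sj = dvi * Ypi) :
    dvi⁻¹ * (sj + t*rr)^2 = dvi⁻¹ * sj^2 + 2*t*(Ypi*rr) + t^2*(dvi⁻¹ * rr^2) := by
  rw [hM]
  field_simp
  ring

set_option maxHeartbeats 1000000 in
theorem stmt14
    (N m p : ℕ) (hN : 1 ≤ N) (hm : 1 ≤ m) (hp : 1 ≤ p)
    (d : Fin N → ℕ)
    (X : ∀ i : Fin N, Set (Fin (d i) → ℝ))
    (hXne : ∀ i, (X i).Nonempty) (hXcl : ∀ i, IsClosed (X i))
    (hXcv : ∀ i, Convex ℝ (X i))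
    (f : ∀ i : Fin N, (Fin (d i) → ℝ) → ℝ)
    (hf : ∀ i, ConvexOn ℝ Set.univ (f i))
    (g : ∀ i : Fin N, (Fin (d i) → ℝ) → Fin m → ℝ)
    (hg : ∀ i j, ConvexOn ℝ Set.univ (fun xi => g i xi j))
    (B : ∀ i : Fin N, Matrix (Fin p) (Fin (d i)) ℝ) (c : ∀ i : Fin N, Fin p → ℝ)
    (F : (∀ i, Fin (d i) → ℝ) → ℝ) (hF : ∀ x, F x = ∑ i, f i (x i))
    (tg : (∀ i, Fin (d i) → ℝ) → Idx N m p → ℝ)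
    (htg1 : ∀ x (i : Fin N) (j : Fin m), tg x (i, Sum.inl j) = g i (x i) j)
    (htg2 : ∀ x (i : Fin N) (j : Fin p), tg x (i, Sum.inr j) = (B i *ᵥ x i + c i) j)
    (ρ : ℝ) (hρ : 0 < ρ)
    (PA PH PHt : Matrix (Fin N) (Fin N) ℝ)
    (hPA : PA.PosSemidef) (hPH : PH.PosSemidef) (hPHt : PHt.PosSemidef)
    (hDdiag : (PA + ρ • PH).IsDiag) (hDpd : (PA + ρ • PH).PosDef)
    (hHHt : (PH - PHt).PosSemidef)
    (hPHnull : ∀ v : Fin N → ℝ, PH *ᵥ v = 0 ↔ ∃ t : ℝ, v = fun _ => t)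
    (hPHtnull : ∀ v : Fin N → ℝ, PHt *ᵥ v = 0 ↔ ∃ t : ℝ, v = fun _ => t)
    (A Htld D : Matrix (Idx N m p) (Idx N m p) ℝ)
    (hA : A = PA ⊗ₖ (1 : Matrix (Blk m p) (Blk m p) ℝ))
    (hHtld : Htld = PHt ⊗ₖ (1 : Matrix (Blk m p) (Blk m p) ℝ))
    (hD : D = A + ρ • (PH ⊗ₖ (1 : Matrix (Blk m p) (Blk m p) ℝ)))
    (Hhalf : Matrix (Idx N m p) (Idx N m p) ℝ)
    (hHhalfpsd : Hhalf.PosSemidef) (hHhalfsq : Hhalf * Hhalf = Htld)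
    (Htdag : Matrix (Idx N m p) (Idx N m p) ℝ) (hHtdag : IsMPInv Htld Htdag)
    (Hhalfdag : Matrix (Idx N m p) (Idx N m p) ℝ) (hHhalfdag : IsMPInv Hhalf Hhalfdag)
    (lam1 : ℝ)
    (hlam1ev : ∃ v : Fin N → ℝ, v ≠ 0 ∧ PA *ᵥ v = lam1 • v)
    (hlam1max : ∀ (μ : ℝ) (v : Fin N → ℝ), v ≠ 0 → PA *ᵥ v = μ • v → μ ≤ lam1)
    (x : ℕ → ∀ i, Fin (d i) → ℝ) (y z : ℕ → Idx N m p → ℝ)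
    (hxX : ∀ k, ∀ i, x (k + 1) i ∈ X i)
    (hy0 : memK (y 0))
    (hyupd : ∀ k, y (k + 1) = projK (D⁻¹ *ᵥ ((A *ᵥ y k) - (Hhalf *ᵥ z k) + tg (x (k + 1)))))
    (hzupd : ∀ k, z (k + 1) = z k + ρ • (Hhalf *ᵥ y (k + 1)))
    (α : ℝ) (hα : 0 < α)
    (hxmin : ∀ k, ∀ w, (∀ i, w i ∈ X i) →
      F (x (k + 1))
          + (1 / 2) * quadForm D⁻¹ (projK ((A *ᵥ y k) - (Hhalf *ᵥ z k) + tg (x (k + 1))))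
          + (α / 2) * ∑ i, ∑ j, (x (k + 1) i j - x k i j) ^ 2
        ≤ F w + (1 / 2) * quadForm D⁻¹ (projK ((A *ᵥ y k) - (Hhalf *ᵥ z k) + tg w))
          + (α / 2) * ∑ i, ∑ j, (w i j - x k i j) ^ 2)
    (xs : ∀ i, Fin (d i) → ℝ) (hxsX : ∀ i, xs i ∈ X i)
    (hxsg : ∀ j, (∑ i, g i (xs i) j) ≤ 0)
    (hxsh : ∀ j, (∑ i, (B i *ᵥ xs i + c i) j) = 0)
    (mus : Fin m → ℝ) (hmus : ∀ j, 0 ≤ mus j) (lams : Fin p → ℝ)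
    (hcs : (∑ j, mus j * ∑ i, g i (xs i) j) = 0)
    (hsaddle : ∀ w, (∀ i, w i ∈ X i) →
      F xs + (∑ j, mus j * ∑ i, g i (xs i) j) + (∑ j, lams j * ∑ i, (B i *ᵥ xs i + c i) j)
        ≤ F w + (∑ j, mus j * ∑ i, g i (w i) j) + (∑ j, lams j * ∑ i, (B i *ᵥ w i + c i) j))
    (ys : Idx N m p → ℝ) (hys : ∀ (i : Fin N) (j : Blk m p), ys (i, j) = Sum.elim mus lams j)
    (zstar vstar : Idx N m p → ℝ)
    (hzstar : zstar = Hhalfdag *ᵥ tg xs)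
    (hvstar : vstar = Hhalf *ᵥ zstar)
    (C1 C2 : ℝ)
    (hC1 : C1 = Real.sqrt ((N : ℝ) * lam1) * Real.sqrt ((∑ j, (mus j) ^ 2) + ∑ j, (lams j) ^ 2))
    (hC2 : C2 = Real.sqrt ((Real.sqrt (quadForm A (y 0)) + C1) ^ 2
      + α * (∑ i, ∑ j, (x 0 i j - xs i j) ^ 2)
      + (1 / ρ) * quadForm Htdag ((Hhalf *ᵥ z 0) - vstar)))
    :
    ∀ k : ℕ, 1 ≤ k →
      Real.sqrt (quadForm A (y k)) ≤ C1 + C2 := by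
  classical
  -- ## Part 1 : infrastructure
  set PD := PA + ρ • PH with hPD
  set dv : Idx N m p → ℝ := fun j => PD j.1 j.1 with hdv
  have hdvpos : ∀ j : Idx N m p, 0 < dv j := by
    intro j
    set xv : Fin N → ℝ := Pi.single j.1 1 with hxv
    have hne : xv ≠ 0 := by
      intro h0
      have := congrFun h0 j.1
      rw [hxv] at this
      simp at this
    have h := hDpd.dotProduct_mulVec_pos hne
    rw [hxv] at h
    simpa [single_dotProduct, Matrix.mulVec_single] using h
  have hdvne : ∀ j, dv j ≠ 0 := fun j => ne_of_gt (hdvpos j)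
  have hDk : D = PD ⊗ₖ (1 : Matrix (Blk m p) (Blk m p) ℝ) := by
    rw [hD, hA, hPD, Matrix.add_kronecker, Matrix.smul_kronecker]
  have hDdiagmat : D = Matrix.diagonal dv := by
    rw [hDk]
    ext ⟨i, b⟩ ⟨j, c⟩
    by_cases hij : i = j
    · subst hij
      by_cases hbc : b = c
      · subst hbc
        simp [Matrix.kroneckerMap_apply, Matrix.one_apply, hdv, Matrix.diagonal_apply_eq]
      · rw [Matrix.diagonal_apply_ne]
        · simp [Matrix.kroneckerMap_apply, Matrix.one_apply, hbc]
        · simp [Prod.ext_iff, hbc]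
    · have h0 : PD i j = 0 := hDdiag hij
      rw [Matrix.diagonal_apply_ne]
      · simp [Matrix.kroneckerMap_apply, h0]
      · simp [Prod.ext_iff, hij]
  have hDinv : D⁻¹ = Matrix.diagonal (fun j => (dv j)⁻¹) := by
    rw [hDdiagmat]
    apply Matrix.inv_eq_right_inv
    rw [Matrix.diagonal_mul_diagonal]
    have : (fun i => dv i * (dv i)⁻¹) = fun _ => (1:ℝ) :=
      funext fun j => mul_inv_cancel₀ (hdvne j)
    rw [this, Matrix.diagonal_one]
  have hquadDinv : ∀ v : Idx N m p → ℝ, quadForm D⁻¹ v = ∑ j, (dv j)⁻¹ * (v j)^2 := by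
    intro v
    rw [quadForm, hDinv, dotProduct]
    exact Finset.sum_congr rfl fun j _ => by rw [Matrix.mulVec_diagonal]; ring
  -- symmetries
  have hPAsym : PAᵀ = PA := aux_herm_symm PA hPA.1
  have hHhalfsym : Hhalfᵀ = Hhalf := aux_herm_symm Hhalf hHhalfpsd.1
  have hAsym : Aᵀ = A := by
    rw [hA, ← Matrix.kroneckerMap_transpose, hPAsym, Matrix.transpose_one]
  have hHtldsym : Htldᵀ = Htld := by
    rw [← hHhalfsq, Matrix.transpose_mul, hHhalfsym]
  have hHtdagsym : Htdagᵀ = Htdag := aux_mpinv_symm Htld Htdag hHtldsym hHtdag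
  have hApsd : ∀ w : Idx N m p → ℝ, 0 ≤ w ⬝ᵥ A *ᵥ w := by
    intro w; rw [hA]; exact aux_kron_one_quad_nonneg hPA w
  -- null space facts
  have hQys : ∀ (Q : Matrix (Fin N) (Fin N) ℝ), (Q *ᵥ (fun _ => (1:ℝ))) = 0 →
      (Q ⊗ₖ (1 : Matrix (Blk m p) (Blk m p) ℝ)) *ᵥ ys = 0 := by
    intro Q hQ1
    funext jb
    obtain ⟨i, b⟩ := jb
    rw [aux_kron_one_mulVec]
    have h1 : ∀ j : Fin N, ys (j, b) = Sum.elim mus lams b := fun j => hys j b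
    have h2 : ∑ j, Q i j * ys (j, b) = (∑ j, Q i j * 1) * Sum.elim mus lams b := by
      rw [Finset.sum_mul]
      exact Finset.sum_congr rfl fun j _ => by rw [h1 j]; ring
    have h3 : (∑ j, Q i j * 1) = 0 := by
      have := congrFun hQ1 i
      simpa [Matrix.mulVec, dotProduct] using this
    rw [Pi.zero_apply, h2, h3, zero_mul]
  have hPH1 : PH *ᵥ (fun _ => (1:ℝ)) = 0 := (hPHnull _).mpr ⟨1, rfl⟩
  have hPHt1 : PHt *ᵥ (fun _ => (1:ℝ)) = 0 := (hPHtnull _).mpr ⟨1, rfl⟩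
  have hHys : (PH ⊗ₖ (1 : Matrix (Blk m p) (Blk m p) ℝ)) *ᵥ ys = 0 := hQys PH hPH1
  have hHtys : Htld *ᵥ ys = 0 := by rw [hHtld]; exact hQys PHt hPHt1
  -- Hhalf and pseudoinverse facts
  have hHhalf_null : ∀ v : Idx N m p → ℝ, Htld *ᵥ v = 0 → Hhalf *ᵥ v = 0 := by
    intro v hv
    have h0 : (Hhalf *ᵥ v) ⬝ᵥ (Hhalf *ᵥ v) = 0 := by
      rw [aux_mulVec_dot_symm Hhalf hHhalfsym, Matrix.mulVec_mulVec, hHhalfsq, hv,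
        dotProduct_zero]
    exact dotProduct_self_eq_zero.mp h0
  have hfix : ∀ v : Idx N m p → ℝ, Htld *ᵥ (Htdag *ᵥ (Hhalf *ᵥ v)) = Hhalf *ᵥ v := by
    intro v
    set q : Idx N m p → ℝ := Hhalf *ᵥ v with hq
    set e : Idx N m p → ℝ := q - Htld *ᵥ (Htdag *ᵥ q) with he
    have hmat : Htld * (Htld * Htdag) = Htld := aux_mp_mul_self Htld Htdag hHtldsym hHtdag
    have hmm : Htld *ᵥ (Htld *ᵥ (Htdag *ᵥ q)) = Htld *ᵥ q := by
      simp only [Matrix.mulVec_mulVec, ← Matrix.mul_assoc]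
      rw [show Htld * Htld * Htdag = Htld by rw [Matrix.mul_assoc, hmat]]
    have h1 : Htld *ᵥ e = 0 := by
      rw [he, Matrix.mulVec_sub, hmm, sub_self]
    have h3 : e ⬝ᵥ q = 0 := by
      rw [hq, ← aux_mulVec_dot_symm Hhalf hHhalfsym e v, hHhalf_null e h1,
        zero_dotProduct]
    have h4 : e ⬝ᵥ (Htld *ᵥ (Htdag *ᵥ q)) = 0 := by
      rw [← aux_mulVec_dot_symm Htld hHtldsym e _, h1, zero_dotProduct]
    have h5 : e ⬝ᵥ e = 0 := by
      nth_rewrite 2 [he]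
      rw [dotProduct_sub, h3, h4, sub_zero]
    have h6 : e = 0 := dotProduct_self_eq_zero.mp h5
    have h7 : q - Htld *ᵥ (Htdag *ᵥ q) = 0 := by rw [← he]; exact h6
    have := sub_eq_zero.mp h7
    exact this.symm
  have hQdnonneg : ∀ v : Idx N m p → ℝ, 0 ≤ (Hhalf *ᵥ v) ⬝ᵥ (Htdag *ᵥ (Hhalf *ᵥ v)) := by
    intro v
    have e1 : (Hhalf *ᵥ v) ⬝ᵥ (Htdag *ᵥ (Hhalf *ᵥ v))
        = (Htdag *ᵥ (Hhalf *ᵥ v)) ⬝ᵥ (Htld *ᵥ (Htdag *ᵥ (Hhalf *ᵥ v))) := by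
      nth_rewrite 1 [← hfix v]
      rw [aux_mulVec_dot_symm Htld hHtldsym]
    rw [e1, hHtld]
    exact aux_kron_one_quad_nonneg hPHt _
  have hcross : ∀ u δ : Idx N m p → ℝ,
      (Hhalf *ᵥ u) ⬝ᵥ (Htdag *ᵥ (Htld *ᵥ δ)) = (Hhalf *ᵥ u) ⬝ᵥ δ := by
    intro u δ
    calc (Hhalf *ᵥ u) ⬝ᵥ (Htdag *ᵥ (Htld *ᵥ δ))
        = (Htdag *ᵥ (Hhalf *ᵥ u)) ⬝ᵥ (Htld *ᵥ δ) := by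
          rw [aux_mulVec_dot_symm Htdag hHtdagsym]
      _ = (Htld *ᵥ (Htdag *ᵥ (Hhalf *ᵥ u))) ⬝ᵥ δ := by
          rw [aux_mulVec_dot_symm Htld hHtldsym]
      _ = (Hhalf *ᵥ u) ⬝ᵥ δ := by rw [hfix u]
  have hHtldquad : ∀ δ : Idx N m p → ℝ,
      (Htld *ᵥ δ) ⬝ᵥ (Htdag *ᵥ (Htld *ᵥ δ)) = δ ⬝ᵥ (Htld *ᵥ δ) := by
    intro δ
    calc (Htld *ᵥ δ) ⬝ᵥ (Htdag *ᵥ (Htld *ᵥ δ))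
        = δ ⬝ᵥ (Htld *ᵥ (Htdag *ᵥ (Htld *ᵥ δ))) := by
          rw [aux_mulVec_dot_symm Htld hHtldsym]
      _ = δ ⬝ᵥ ((Htld * Htdag * Htld) *ᵥ δ) := by
          rw [Matrix.mulVec_mulVec, Matrix.mulVec_mulVec]
      _ = δ ⬝ᵥ (Htld *ᵥ δ) := by rw [hHtdag.1]
  -- ## Part 2 : coordinates of the dual update and the variational inequality
  have hcoord : ∀ k : ℕ,
      (∀ jj : Idx N m p, dv jj * y (k+1) jj
        = projK ((A *ᵥ y k) - (Hhalf *ᵥ z k) + tg (x (k+1))) jj)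
      ∧ (∀ (i : Fin N) (aa : Fin m), 0 ≤ y (k+1) (i, Sum.inl aa)) := by
    intro k
    have hYdef : y (k+1) = projK (D⁻¹ *ᵥ ((A *ᵥ y k) - (Hhalf *ᵥ z k) + tg (x (k+1)))) := hyupd k
    set s : Idx N m p → ℝ := (A *ᵥ y k) - (Hhalf *ᵥ z k) + tg (x (k+1)) with hs
    have hmv : ∀ jj, (D⁻¹ *ᵥ s) jj = (dv jj)⁻¹ * s jj := by
      intro jj; rw [hDinv, Matrix.mulVec_diagonal]
    constructor
    · rintro ⟨i, aa | bb⟩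
      · rw [hYdef, aux_projK_inl, aux_projK_inl, hmv]
        rcases le_total (s (i, Sum.inl aa)) 0 with h | h
        · rw [max_eq_right h, max_eq_right, mul_zero]
          exact mul_nonpos_of_nonneg_of_nonpos (inv_nonneg.mpr (hdvpos _).le) h
        · rw [max_eq_left h, max_eq_left (mul_nonneg (inv_nonneg.mpr (hdvpos _).le) h),
            ← mul_assoc, mul_inv_cancel₀ (hdvne _), one_mul]
      · rw [hYdef, aux_projK_inr, aux_projK_inr, hmv, ← mul_assoc,
          mul_inv_cancel₀ (hdvne _), one_mul]
    · intro i aa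
      rw [hYdef, aux_projK_inl]
      exact le_max_right _ _
  have hLag : ∀ k : ℕ,
      F (x (k+1)) + (∑ jj, y (k+1) jj * tg (x (k+1)) jj)
        + (α/2) * (∑ i, ∑ jj, (x (k+1) i jj - x k i jj)^2)
        + (α/2) * (∑ i, ∑ jj, (xs i jj - x (k+1) i jj)^2)
      ≤ F xs + (∑ jj, y (k+1) jj * tg xs jj)
        + (α/2) * (∑ i, ∑ jj, (xs i jj - x k i jj)^2) := by
    intro k
    obtain ⟨hDYp, hYpK⟩ := hcoord k
    set xp := x (k+1) with hxp
    set Yp := y (k+1) with hYp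
    set s : Idx N m p → ℝ := (A *ᵥ y k) - (Hhalf *ᵥ z k) + tg xp with hs
    set r : Idx N m p → ℝ := fun jj => tg xs jj - tg xp jj with hr
    set R : ℝ := ∑ jj, (dv jj)⁻¹ * (r jj)^2 with hR
    set T : ℝ := ∑ i, ∑ jj, (xs i jj - xp i jj)^2 with hT
    set Sp : ℝ := ∑ i, ∑ jj, (xp i jj - x k i jj)^2 with hSp
    set Ss : ℝ := ∑ i, ∑ jj, (xs i jj - x k i jj)^2 with hSs
    set YR : ℝ := ∑ jj, Yp jj * r jj with hYR
    have hRnn : 0 ≤ R := by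
      rw [hR]
      exact Finset.sum_nonneg fun jj _ =>
        mul_nonneg (inv_nonneg.mpr (hdvpos jj).le) (sq_nonneg _)
    have hTnn : 0 ≤ T := by
      rw [hT]
      exact Finset.sum_nonneg fun i _ => Finset.sum_nonneg fun jj _ => sq_nonneg _
    have hMnn : 0 ≤ R/2 + (α/2)*T := by positivity
    have hkey : F xp - F xs - YR + (α/2)*(Sp + T - Ss) ≤ 0 := by
      apply aux_le_zero_of_forall_t hMnn
      intro t ht0 ht1
      set wt : ∀ i, Fin (d i) → ℝ := fun i => (1-t) • xp i + t • xs i with hwt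
      have hwtX : ∀ i, wt i ∈ X i := fun i =>
        hXcv i (hxX k i) (hxsX i) (by linarith) ht0.le (by ring)
      have hmin' : F xp + (1/2) * quadForm D⁻¹ (projK s)
            + (α/2) * Sp
          ≤ F wt + (1/2) * quadForm D⁻¹ (projK ((A *ᵥ y k) - (Hhalf *ᵥ z k) + tg wt))
            + (α/2) * (∑ i, ∑ jj, (wt i jj - x k i jj)^2) := hxmin k wt hwtX
      have hFwt : F wt ≤ (1-t) * F xp + t * F xs := by
        rw [hF, hF, hF]
        calc ∑ i, f i (wt i) ≤ ∑ i, ((1-t) * f i (xp i) + t * f i (xs i)) := by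
              refine Finset.sum_le_sum fun i _ => ?_
              have h := (hf i).2 (Set.mem_univ (xp i)) (Set.mem_univ (xs i))
                (by linarith : (0:ℝ) ≤ 1 - t) ht0.le (by ring)
              simpa [smul_eq_mul] using h
          _ = (1-t) * ∑ i, f i (xp i) + t * ∑ i, f i (xs i) := by
              rw [Finset.sum_add_distrib, Finset.mul_sum, Finset.mul_sum]
      have hquad : quadForm D⁻¹ (projK ((A *ᵥ y k) - (Hhalf *ᵥ z k) + tg wt))
          ≤ quadForm D⁻¹ (projK s) + 2*t*YR + t^2 * R := by
        rw [hquadDinv, hquadDinv, hR, hYR]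
        have hpt : ∀ jj : Idx N m p,
            (dv jj)⁻¹ * (projK ((A *ᵥ y k) - (Hhalf *ᵥ z k) + tg wt) jj)^2
            ≤ (dv jj)⁻¹ * (projK s jj)^2 + 2*t*(Yp jj * r jj)
              + t^2*((dv jj)⁻¹ * (r jj)^2) := by
          rintro ⟨i, aa | bb⟩
          · have hconv : tg wt (i, Sum.inl aa)
                ≤ (1-t) * tg xp (i, Sum.inl aa) + t * tg xs (i, Sum.inl aa) := by
              rw [htg1, htg1, htg1]
              have h := (hg i aa).2 (Set.mem_univ (xp i)) (Set.mem_univ (xs i))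
                (by linarith : (0:ℝ) ≤ 1 - t) ht0.le (by ring)
              simpa [smul_eq_mul] using h
            have hre : r (i, Sum.inl aa) = tg xs (i, Sum.inl aa) - tg xp (i, Sum.inl aa) := rfl
            have hwtj : ((A *ᵥ y k) - (Hhalf *ᵥ z k) + tg wt) (i, Sum.inl aa)
                = ((A *ᵥ y k) (i, Sum.inl aa) - (Hhalf *ᵥ z k) (i, Sum.inl aa))
                  + tg wt (i, Sum.inl aa) := rfl
            have hsj : s (i, Sum.inl aa)
                = ((A *ᵥ y k) (i, Sum.inl aa) - (Hhalf *ᵥ z k) (i, Sum.inl aa))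
                  + tg xp (i, Sum.inl aa) := rfl
            rw [aux_projK_inl, aux_projK_inl]
            apply aux_proj_quad_bound _ _ _ _ _ _ (hdvpos _)
            · rw [← aux_projK_inl s i aa]
              exact (hDYp (i, Sum.inl aa)).symm
            · rw [hwtj, hsj, hre]
              linarith [hconv]
          · have hre : r (i, Sum.inr bb) = tg xs (i, Sum.inr bb) - tg xp (i, Sum.inr bb) := rfl
            have hwtj : ((A *ᵥ y k) - (Hhalf *ᵥ z k) + tg wt) (i, Sum.inr bb)
                = ((A *ᵥ y k) (i, Sum.inr bb) - (Hhalf *ᵥ z k) (i, Sum.inr bb))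
                  + tg wt (i, Sum.inr bb) := rfl
            have hsj : s (i, Sum.inr bb)
                = ((A *ᵥ y k) (i, Sum.inr bb) - (Hhalf *ᵥ z k) (i, Sum.inr bb))
                  + tg xp (i, Sum.inr bb) := rfl
            have haffine : tg wt (i, Sum.inr bb)
                = (1-t) * tg xp (i, Sum.inr bb) + t * tg xs (i, Sum.inr bb) := by
              rw [htg2, htg2, htg2]
              have hBwt : B i *ᵥ wt i = (1-t) • (B i *ᵥ xp i) + t • (B i *ᵥ xs i) := by
                show B i *ᵥ ((1-t) • xp i + t • xs i) = _
                rw [Matrix.mulVec_add, Matrix.mulVec_smul, Matrix.mulVec_smul]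
              have : (B i *ᵥ wt i + c i) bb = (B i *ᵥ wt i) bb + c i bb := rfl
              rw [this, hBwt]
              simp only [Pi.add_apply, Pi.smul_apply, smul_eq_mul]
              ring
            have heq : ((A *ᵥ y k) - (Hhalf *ᵥ z k) + tg wt) (i, Sum.inr bb)
                = s (i, Sum.inr bb) + t * r (i, Sum.inr bb) := by
              rw [hwtj, hsj, hre, haffine]
              ring
            rw [aux_projK_inr, aux_projK_inr, heq]
            have hMY : s (i, Sum.inr bb) = dv (i, Sum.inr bb) * Yp (i, Sum.inr bb) := by
              rw [← aux_projK_inr s i bb]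
              exact (hDYp (i, Sum.inr bb)).symm
            exact (aux_proj_quad_bound_inr _ _ _ _ _ (hdvpos _) hMY).le
        calc (∑ jj, (dv jj)⁻¹ * (projK ((A *ᵥ y k) - (Hhalf *ᵥ z k) + tg wt) jj)^2)
            ≤ ∑ jj, ((dv jj)⁻¹ * (projK s jj)^2 + 2*t*(Yp jj * r jj)
              + t^2*((dv jj)⁻¹ * (r jj)^2)) := Finset.sum_le_sum fun jj _ => hpt jj
          _ = _ := by
              rw [Finset.sum_add_distrib, Finset.sum_add_distrib,
                ← Finset.mul_sum, ← Finset.mul_sum]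
      have hprox : (∑ i, ∑ jj, (wt i jj - x k i jj)^2)
          = (1-t) * Sp + t * Ss - t*(1-t) * T := by
        have hpt2 : ∀ (i : Fin N) (jj : Fin (d i)), (wt i jj - x k i jj)^2
            = (1-t)*(xp i jj - x k i jj)^2 + t*(xs i jj - x k i jj)^2
              - t*(1-t)*(xs i jj - xp i jj)^2 := by
          intro i jj
          have hwtv : wt i jj = (1-t)*xp i jj + t*xs i jj := by
            show ((1-t) • xp i + t • xs i) jj = _
            simp only [Pi.add_apply, Pi.smul_apply, smul_eq_mul]
          rw [hwtv]; ring
        calc (∑ i, ∑ jj, (wt i jj - x k i jj)^2)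
            = ∑ i, ∑ jj, ((1-t)*(xp i jj - x k i jj)^2 + t*(xs i jj - x k i jj)^2
              - t*(1-t)*(xs i jj - xp i jj)^2) :=
              Finset.sum_congr rfl fun i _ => Finset.sum_congr rfl fun jj _ => hpt2 i jj
          _ = (1-t) * Sp + t * Ss - t*(1-t) * T := by
              rw [hSp, hSs, hT]
              simp only [Finset.sum_add_distrib, Finset.sum_sub_distrib, ← Finset.mul_sum]
              try ring
      have hstep : F xp + (1/2) * quadForm D⁻¹ (projK s) + (α/2)*Sp
          ≤ ((1-t)*F xp + t*F xs) + (1/2)*(quadForm D⁻¹ (projK s) + 2*t*YR + t^2*R)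
            + (α/2)*((1-t)*Sp + t*Ss - t*(1-t)*T) := by
        have hprox' : (α/2) * (∑ i, ∑ jj, (wt i jj - x k i jj)^2)
            = (α/2) * ((1-t) * Sp + t * Ss - t*(1-t) * T) := by rw [hprox]
        linarith [hmin', hFwt, hquad, hprox'.le, hprox'.ge]
      have hring : t * (F xp - F xs - YR + (α/2)*(Sp + T - Ss)) - t*(t*(R/2 + (α/2)*T))
          = (F xp + (1/2) * quadForm D⁻¹ (projK s) + (α/2)*Sp)
            - (((1-t)*F xp + t*F xs) + (1/2)*(quadForm D⁻¹ (projK s) + 2*t*YR + t^2*R)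
              + (α/2)*((1-t)*Sp + t*Ss - t*(1-t)*T)) := by ring
      have hts : t * (F xp - F xs - YR + (α/2)*(Sp + T - Ss)) ≤ t*(t*(R/2 + (α/2)*T)) := by
        linarith [hstep, hring]
      exact le_of_mul_le_mul_left hts ht0
    have hYRsplit : YR = (∑ jj, Yp jj * tg xs jj) - (∑ jj, Yp jj * tg xp jj) := by
      rw [hYR, ← Finset.sum_sub_distrib]
      exact Finset.sum_congr rfl fun jj _ => by rw [hr]; ring
    linarith [hkey, hYRsplit]
  -- ## Part 3 : descent of the Lyapunov function
  have hdotY : ∀ u : ∀ i, Fin (d i) → ℝ,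
      (∑ jj, ys jj * tg u jj)
        = (∑ j : Fin m, mus j * ∑ i, g i (u i) j)
          + (∑ j : Fin p, lams j * ∑ i, (B i *ᵥ u i + c i) j) := by
    intro u
    rw [aux_idx_sum (fun jj => ys jj * tg u jj)]
    have hterm : ∀ i : Fin N,
        ((∑ aa : Fin m, ys (i, Sum.inl aa) * tg u (i, Sum.inl aa))
          + ∑ bb : Fin p, ys (i, Sum.inr bb) * tg u (i, Sum.inr bb))
        = (∑ aa : Fin m, mus aa * g i (u i) aa)
          + ∑ bb : Fin p, lams bb * (B i *ᵥ u i + c i) bb := by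
      intro i
      congr 1
      · exact Finset.sum_congr rfl fun aa _ => by rw [hys i (Sum.inl aa), htg1]; rfl
      · exact Finset.sum_congr rfl fun bb _ => by rw [hys i (Sum.inr bb), htg2]; rfl
    rw [Finset.sum_congr rfl (fun i _ => hterm i), Finset.sum_add_distrib]
    congr 1
    · rw [Finset.sum_comm]
      exact Finset.sum_congr rfl fun aa _ => by rw [Finset.mul_sum]
    · rw [Finset.sum_comm]
      exact Finset.sum_congr rfl fun bb _ => by rw [Finset.mul_sum]
  have hsadk : ∀ k : ℕ, F xs + (∑ jj, ys jj * tg xs jj)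
      ≤ F (x (k+1)) + (∑ jj, ys jj * tg (x (k+1)) jj) := by
    intro k
    rw [hdotY, hdotY]
    have h := hsaddle (x (k+1)) (hxX k)
    linarith
  -- structure of tg xs - vstar
  have i0 : Fin N := ⟨0, hN⟩
  set wS : Idx N m p → ℝ := tg xs - vstar with hwS
  have hHw : Hhalf *ᵥ wS = 0 := by
    have hmat : Hhalf * (Hhalf * Hhalfdag) = Hhalf :=
      aux_mp_mul_self Hhalf Hhalfdag hHhalfsym hHhalfdag
    rw [hwS, Matrix.mulVec_sub, hvstar, hzstar]
    simp only [Matrix.mulVec_mulVec, ← Matrix.mul_assoc]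
    rw [show Hhalf * Hhalf * Hhalfdag = Hhalf by rw [Matrix.mul_assoc, hmat], sub_self]
  have hHtw : Htld *ᵥ wS = 0 := by
    rw [← hHhalfsq, ← Matrix.mulVec_mulVec, hHw, Matrix.mulVec_zero]
  have hwb : ∀ b : Blk m p, ∀ i : Fin N, wS (i, b) = wS (i0, b) := by
    intro b
    have h0 : PHt *ᵥ (fun i => wS (i, b)) = 0 := by
      funext i
      have h1 : ((PHt ⊗ₖ (1 : Matrix (Blk m p) (Blk m p) ℝ)) *ᵥ wS) (i, b) = 0 := by
        rw [← hHtld]; exact congrFun hHtw (i, b)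
      rw [aux_kron_one_mulVec] at h1
      simpa [Matrix.mulVec, dotProduct] using h1
    obtain ⟨tb, htb⟩ := (hPHtnull _).mp h0
    intro i
    have e1 : wS (i, b) = (fun i => wS (i, b)) i := rfl
    have e2 : wS (i0, b) = (fun i => wS (i, b)) i0 := rfl
    rw [e1, e2, htb]
  have hvstar_sum : ∀ b : Blk m p, (∑ i, vstar (i, b)) = 0 := by
    intro b
    set ob : Idx N m p → ℝ := fun jc => if jc.2 = b then 1 else 0 with hob
    have hobconst : ∀ cb : Blk m p, PHt *ᵥ (fun _ : Fin N => ob (i0, cb)) = 0 :=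
      fun cb => (hPHtnull _).mpr ⟨ob (i0, cb), rfl⟩
    have hHtob : Htld *ᵥ ob = 0 := by
      funext jc
      obtain ⟨i, cb⟩ := jc
      rw [hHtld, aux_kron_one_mulVec]
      have hcc : ∀ j : Fin N, ob (j, cb) = ob (i0, cb) := fun j => rfl
      have := congrFun (hobconst cb) i
      simp only [Matrix.mulVec, dotProduct] at this
      rw [Pi.zero_apply]
      calc ∑ j, PHt i j * ob (j, cb) = ∑ j, PHt i j * ob (i0, cb) :=
            Finset.sum_congr rfl fun j _ => by rw [hcc j]
        _ = 0 := this
    have hHob : Hhalf *ᵥ ob = 0 := hHhalf_null ob hHtob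
    have h1 : ob ⬝ᵥ vstar = 0 := by
      rw [hvstar, ← aux_mulVec_dot_symm Hhalf hHhalfsym ob zstar, hHob, zero_dotProduct]
    have h2 : ob ⬝ᵥ vstar = ∑ i, vstar (i, b) := by
      rw [dotProduct, Fintype.sum_prod_type]
      refine Finset.sum_congr rfl fun i _ => ?_
      simp [hob, ite_mul, Finset.sum_ite_eq']
    rw [← h2, h1]
  have htv_sum : ∀ b : Blk m p, (N : ℝ) * wS (i0, b) = ∑ i, tg xs (i, b) := by
    intro b
    have h1 : (∑ i, wS (i, b)) = ∑ i, tg xs (i, b) := by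
      have e : ∀ i : Fin N, wS (i, b) = tg xs (i, b) - vstar (i, b) := fun i => rfl
      rw [Finset.sum_congr rfl fun i _ => e i, Finset.sum_sub_distrib, hvstar_sum, sub_zero]
    have h2 : (∑ i, wS (i, b)) = (N:ℝ) * wS (i0, b) := by
      rw [Finset.sum_congr rfl fun i _ => hwb b i, Finset.sum_const, Finset.card_univ,
        Fintype.card_fin, nsmul_eq_mul]
    rw [← h2, h1]
  have hNpos : (0:ℝ) < N := by exact_mod_cast hN
  have htv_inl : ∀ aa : Fin m, wS (i0, Sum.inl aa) ≤ 0 := by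
    intro aa
    have h1 := htv_sum (Sum.inl aa)
    have h2 : (∑ i, tg xs (i, Sum.inl aa)) = ∑ i, g i (xs i) aa :=
      Finset.sum_congr rfl fun i _ => htg1 xs i aa
    nlinarith [hxsg aa, h1, h2]
  have htv_inr : ∀ bb : Fin p, wS (i0, Sum.inr bb) = 0 := by
    intro bb
    have h1 := htv_sum (Sum.inr bb)
    have h2 : (∑ i, tg xs (i, Sum.inr bb)) = ∑ i, (B i *ᵥ xs i + c i) bb :=
      Finset.sum_congr rfl fun i _ => htg2 xs i bb
    have hz : (N:ℝ) * wS (i0, Sum.inr bb) = 0 := by rw [h1, h2, hxsh bb]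
    exact (mul_eq_zero.mp hz).resolve_left (ne_of_gt hNpos)
  -- the descent inequality
  have hVmono : ∀ k : ℕ,
      quadForm A (y (k+1) - ys) + α * (∑ i, ∑ jj, (x (k+1) i jj - xs i jj)^2)
        + (1/ρ) * quadForm Htdag (Hhalf *ᵥ z (k+1) - vstar)
      ≤ quadForm A (y k - ys) + α * (∑ i, ∑ jj, (x k i jj - xs i jj)^2)
        + (1/ρ) * quadForm Htdag (Hhalf *ᵥ z k - vstar) := by
    intro k
    have hL := hLag k
    have hS := hsadk k
    obtain ⟨hDYp, hYpK⟩ := hcoord k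
    set xp := x (k+1) with hxp
    set Yp := y (k+1) with hYp
    set dlt : Idx N m p → ℝ := Yp - ys with hdlt
    set gam : Idx N m p → ℝ := y k - ys with hgam
    set qk : Idx N m p → ℝ := Hhalf *ᵥ z k - vstar with hqk
    set s : Idx N m p → ℝ := (A *ᵥ y k) - (Hhalf *ᵥ z k) + tg xp with hs
    have hE1 : (∑ jj, dlt jj * (tg xp jj - tg xs jj))
        ≤ (α/2) * ((∑ i, ∑ jj, (xs i jj - x k i jj)^2)
            - (∑ i, ∑ jj, (xp i jj - x k i jj)^2)
            - (∑ i, ∑ jj, (xs i jj - xp i jj)^2)) := by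
      have hsplit : (∑ jj, dlt jj * (tg xp jj - tg xs jj))
          = ((∑ jj, Yp jj * tg xp jj) - (∑ jj, Yp jj * tg xs jj))
            - ((∑ jj, ys jj * tg xp jj) - (∑ jj, ys jj * tg xs jj)) := by
        rw [← Finset.sum_sub_distrib, ← Finset.sum_sub_distrib, ← Finset.sum_sub_distrib]
        refine Finset.sum_congr rfl fun jj _ => ?_
        have e : dlt jj = Yp jj - ys jj := rfl
        rw [e]; ring
      linarith [hL, hS, hsplit.le, hsplit.ge]
    have hcone : (∑ jj, dlt jj * (dv jj * Yp jj - s jj)) ≤ 0 := by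
      refine Finset.sum_nonpos ?_
      rintro ⟨i, aa | bb⟩ _
      · have hmax : dv (i,Sum.inl aa) * Yp (i,Sum.inl aa) = max (s (i,Sum.inl aa)) 0 := by
          rw [hDYp (i,Sum.inl aa), aux_projK_inl]
        rcases le_or_gt 0 (s (i, Sum.inl aa)) with h | h
        · rw [hmax, max_eq_left h, sub_self, mul_zero]
        · have hY0 : Yp (i, Sum.inl aa) = 0 := by
            have h0 := hmax
            rw [max_eq_right h.le] at h0
            exact (mul_eq_zero.mp h0).resolve_left (hdvne _)
          have hd : dlt (i,Sum.inl aa) = Yp (i,Sum.inl aa) - ys (i,Sum.inl aa) := rfl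
          rw [hmax, max_eq_right h.le, hd, hY0, zero_sub, zero_sub, neg_mul_neg]
          have hysnn : 0 ≤ ys (i, Sum.inl aa) := by rw [hys i (Sum.inl aa)]; exact hmus aa
          exact mul_nonpos_of_nonneg_of_nonpos hysnn h.le
      · have hmax : dv (i,Sum.inr bb) * Yp (i,Sum.inr bb) = s (i,Sum.inr bb) := by
          rw [hDYp (i,Sum.inr bb), aux_projK_inr]
        rw [hmax, sub_self, mul_zero]
    have hE3 : (∑ jj, dlt jj * (tg xs jj - vstar jj)) ≤ 0 := by
      rw [aux_idx_sum (fun jj => dlt jj * (tg xs jj - vstar jj))]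
      have hterm : ∀ i : Fin N,
          ((∑ aa : Fin m, dlt (i,Sum.inl aa) * (tg xs (i,Sum.inl aa) - vstar (i,Sum.inl aa)))
            + ∑ bb : Fin p, dlt (i,Sum.inr bb) * (tg xs (i,Sum.inr bb) - vstar (i,Sum.inr bb)))
          = ∑ aa : Fin m, dlt (i,Sum.inl aa) * wS (i0, Sum.inl aa) := by
        intro i
        have h2 : ∀ bb : Fin p, tg xs (i,Sum.inr bb) - vstar (i,Sum.inr bb) = 0 := by
          intro bb
          have e : tg xs (i,Sum.inr bb) - vstar (i,Sum.inr bb) = wS (i, Sum.inr bb) := rfl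
          rw [e, hwb (Sum.inr bb) i, htv_inr bb]
        have h1 : ∀ aa : Fin m, tg xs (i,Sum.inl aa) - vstar (i,Sum.inl aa)
            = wS (i0, Sum.inl aa) := by
          intro aa
          have e : tg xs (i,Sum.inl aa) - vstar (i,Sum.inl aa) = wS (i, Sum.inl aa) := rfl
          rw [e, hwb (Sum.inl aa) i]
        have e2 : (∑ bb : Fin p, dlt (i,Sum.inr bb) * (tg xs (i,Sum.inr bb) - vstar (i,Sum.inr bb))) = 0 :=
          Finset.sum_eq_zero fun bb _ => by rw [h2 bb, mul_zero]
        rw [e2, add_zero]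
        exact Finset.sum_congr rfl fun aa _ => by rw [h1 aa]
      rw [Finset.sum_congr rfl (fun i _ => hterm i)]
      have hsplit2 : (∑ i, ∑ aa : Fin m, dlt (i,Sum.inl aa) * wS (i0, Sum.inl aa))
          = (∑ i, ∑ aa : Fin m, Yp (i,Sum.inl aa) * wS (i0, Sum.inl aa))
            - (∑ i, ∑ aa : Fin m, ys (i,Sum.inl aa) * wS (i0, Sum.inl aa)) := by
        rw [← Finset.sum_sub_distrib]
        refine Finset.sum_congr rfl fun i _ => ?_
        rw [← Finset.sum_sub_distrib]
        refine Finset.sum_congr rfl fun aa _ => ?_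
        have e : dlt (i,Sum.inl aa) = Yp (i,Sum.inl aa) - ys (i,Sum.inl aa) := rfl
        rw [e]; ring
      have hterm1 : (∑ i, ∑ aa : Fin m, Yp (i,Sum.inl aa) * wS (i0, Sum.inl aa)) ≤ 0 :=
        Finset.sum_nonpos fun i _ => Finset.sum_nonpos fun aa _ =>
          mul_nonpos_of_nonneg_of_nonpos (hYpK i aa) (htv_inl aa)
      have hterm2 : (∑ i, ∑ aa : Fin m, ys (i,Sum.inl aa) * wS (i0, Sum.inl aa)) = 0 := by
        have e1 : ∀ i : Fin N, (∑ aa : Fin m, ys (i,Sum.inl aa) * wS (i0, Sum.inl aa))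
            = ∑ aa : Fin m, mus aa * wS (i0, Sum.inl aa) :=
          fun i => Finset.sum_congr rfl fun aa _ => by rw [hys i (Sum.inl aa)]; rfl
        rw [Finset.sum_congr rfl (fun i _ => e1 i), Finset.sum_const, Finset.card_univ,
          Fintype.card_fin, nsmul_eq_mul, Finset.mul_sum]
        have e2 : ∀ aa : Fin m, (N:ℝ) * (mus aa * wS (i0, Sum.inl aa))
            = mus aa * (∑ i, g i (xs i) aa) := by
          intro aa
          have h3 := htv_sum (Sum.inl aa)
          have h4 : (∑ i, tg xs (i, Sum.inl aa)) = ∑ i, g i (xs i) aa :=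
            Finset.sum_congr rfl fun i _ => htg1 xs i aa
          rw [← h4, ← h3]; ring
        rw [Finset.sum_congr rfl (fun aa _ => e2 aa)]
        exact hcs
      linarith [hsplit2.le, hsplit2.ge, hterm1, hterm2]
    -- E4 : combine
    have hE4 : dlt ⬝ᵥ (D *ᵥ Yp) - dlt ⬝ᵥ (A *ᵥ y k) + dlt ⬝ᵥ (Hhalf *ᵥ z k) - dlt ⬝ᵥ vstar
        ≤ (α/2) * ((∑ i, ∑ jj, (xs i jj - x k i jj)^2)
            - (∑ i, ∑ jj, (xp i jj - x k i jj)^2)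
            - (∑ i, ∑ jj, (xs i jj - xp i jj)^2)) := by
      have hDvec : D *ᵥ Yp = fun jj => dv jj * Yp jj := by
        funext jj; rw [hDdiagmat, Matrix.mulVec_diagonal]
      have hc1 : (∑ jj, dlt jj * (dv jj * Yp jj - s jj))
          = dlt ⬝ᵥ (D *ᵥ Yp)
            - (dlt ⬝ᵥ (A *ᵥ y k) - dlt ⬝ᵥ (Hhalf *ᵥ z k) + dlt ⬝ᵥ tg xp) := by
        have e1 : dlt ⬝ᵥ s
            = dlt ⬝ᵥ (A *ᵥ y k) - dlt ⬝ᵥ (Hhalf *ᵥ z k) + dlt ⬝ᵥ tg xp := by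
          rw [hs, dotProduct_add, dotProduct_sub]
        rw [← e1, hDvec]
        simp only [dotProduct]
        rw [← Finset.sum_sub_distrib]
        exact Finset.sum_congr rfl fun jj _ => by ring
      have hc2 : (∑ jj, dlt jj * (tg xp jj - tg xs jj)) = dlt ⬝ᵥ tg xp - dlt ⬝ᵥ tg xs := by
        simp only [dotProduct]
        rw [← Finset.sum_sub_distrib]
        exact Finset.sum_congr rfl fun jj _ => by ring
      have hc3 : (∑ jj, dlt jj * (tg xs jj - vstar jj)) = dlt ⬝ᵥ tg xs - dlt ⬝ᵥ vstar := by
        simp only [dotProduct]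
        rw [← Finset.sum_sub_distrib]
        exact Finset.sum_congr rfl fun jj _ => by ring
      linarith [hcone, hE1, hE3, hc1.le, hc1.ge, hc2.le, hc2.ge, hc3.le, hc3.ge]
    -- expansions
    have hYd : Yp = dlt + ys := by rw [hdlt]; abel
    have e : (PH ⊗ₖ (1 : Matrix (Blk m p) (Blk m p) ℝ)) *ᵥ Yp
        = (PH ⊗ₖ (1 : Matrix (Blk m p) (Blk m p) ℝ)) *ᵥ dlt := by
      conv_lhs => rw [hYd]
      rw [Matrix.mulVec_add, hHys, add_zero]
    have hsplitD : dlt ⬝ᵥ (D *ᵥ Yp)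
        = dlt ⬝ᵥ (A *ᵥ Yp)
          + ρ * (dlt ⬝ᵥ ((PH ⊗ₖ (1 : Matrix (Blk m p) (Blk m p) ℝ)) *ᵥ dlt)) := by
      rw [hD, Matrix.add_mulVec, dotProduct_add, Matrix.smul_mulVec,
        dotProduct_smul, smul_eq_mul, e]
    have hHtYp : Htld *ᵥ Yp = Htld *ᵥ dlt := by
      conv_lhs => rw [hYd]
      rw [Matrix.mulVec_add, hHtys, add_zero]
    have hApol : dlt ⬝ᵥ (A *ᵥ Yp) - dlt ⬝ᵥ (A *ᵥ y k)
        = (dlt ⬝ᵥ (A *ᵥ dlt) - gam ⬝ᵥ (A *ᵥ gam)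
            + (dlt - gam) ⬝ᵥ (A *ᵥ (dlt - gam)))/2 := by
      have e0 : Yp - y k = dlt - gam := by rw [hdlt, hgam]; abel
      have e1 : dlt ⬝ᵥ (A *ᵥ Yp) - dlt ⬝ᵥ (A *ᵥ y k) = dlt ⬝ᵥ (A *ᵥ (Yp - y k)) := by
        rw [Matrix.mulVec_sub, dotProduct_sub]
      rw [e1, e0]
      exact aux_polar_identity A hAsym dlt gam
    have hqnext : Hhalf *ᵥ z (k+1) - vstar = qk + ρ • (Htld *ᵥ dlt) := by
      rw [hzupd k, Matrix.mulVec_add, Matrix.mulVec_smul, Matrix.mulVec_mulVec, hHhalfsq,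
        hHtYp, hqk]
      abel
    have hQdexp : quadForm Htdag (qk + ρ • (Htld *ᵥ dlt))
        = quadForm Htdag qk + 2*ρ*(qk ⬝ᵥ dlt) + ρ^2 * (dlt ⬝ᵥ (Htld *ᵥ dlt)) := by
      have hqkH : qk = Hhalf *ᵥ (z k - zstar) := by
        rw [hqk, Matrix.mulVec_sub, hvstar]
      have hcr1 : qk ⬝ᵥ (Htdag *ᵥ (Htld *ᵥ dlt)) = qk ⬝ᵥ dlt := by
        rw [hqkH]; exact hcross (z k - zstar) dlt
      have hcr2 : (Htld *ᵥ dlt) ⬝ᵥ (Htdag *ᵥ qk) = qk ⬝ᵥ (Htdag *ᵥ (Htld *ᵥ dlt)) :=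
        aux_dot_mulVec_symm Htdag hHtdagsym _ _
      rw [quadForm, quadForm]
      simp only [Matrix.mulVec_add, Matrix.mulVec_smul, add_dotProduct,
        dotProduct_add, smul_dotProduct, dotProduct_smul, smul_eq_mul]
      rw [hcr2, hcr1, hHtldquad dlt]
      ring
    have hqdot : dlt ⬝ᵥ (Hhalf *ᵥ z k) - dlt ⬝ᵥ vstar = qk ⬝ᵥ dlt := by
      rw [← dotProduct_sub, ← hqk, dotProduct_comm]
    have hq3 : (1/ρ) * quadForm Htdag (qk + ρ • (Htld *ᵥ dlt))
        = (1/ρ) * quadForm Htdag qk + 2*(qk ⬝ᵥ dlt) + ρ*(dlt ⬝ᵥ (Htld *ᵥ dlt)) := by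
      rw [hQdexp]
      field_simp
    have hQdel : 0 ≤ (dlt - gam) ⬝ᵥ (A *ᵥ (dlt - gam)) := hApsd _
    have hQH : 0 ≤ dlt ⬝ᵥ ((PH ⊗ₖ (1 : Matrix (Blk m p) (Blk m p) ℝ)) *ᵥ dlt) :=
      aux_kron_one_quad_nonneg hPH dlt
    have hQHdiff : dlt ⬝ᵥ (Htld *ᵥ dlt)
        ≤ dlt ⬝ᵥ ((PH ⊗ₖ (1 : Matrix (Blk m p) (Blk m p) ℝ)) *ᵥ dlt) := by
      have hkr : (PH ⊗ₖ (1 : Matrix (Blk m p) (Blk m p) ℝ))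
          - ((PH - PHt) ⊗ₖ (1 : Matrix (Blk m p) (Blk m p) ℝ)) = Htld := by
        rw [hHtld]
        ext ⟨i,b⟩ ⟨j,cc⟩
        simp [Matrix.kroneckerMap_apply, Matrix.sub_apply, sub_mul]
      have h0 : 0 ≤ dlt ⬝ᵥ (((PH - PHt) ⊗ₖ (1 : Matrix (Blk m p) (Blk m p) ℝ)) *ᵥ dlt) :=
        aux_kron_one_quad_nonneg hHHt dlt
      have e' : dlt ⬝ᵥ (Htld *ᵥ dlt)
          = dlt ⬝ᵥ ((PH ⊗ₖ (1 : Matrix (Blk m p) (Blk m p) ℝ)) *ᵥ dlt)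
            - dlt ⬝ᵥ (((PH - PHt) ⊗ₖ (1 : Matrix (Blk m p) (Blk m p) ℝ)) *ᵥ dlt) := by
        rw [← hkr, Matrix.sub_mulVec, dotProduct_sub]
      linarith
    have hSpnn : 0 ≤ (∑ i, ∑ jj, (xp i jj - x k i jj)^2) :=
      Finset.sum_nonneg fun i _ => Finset.sum_nonneg fun jj _ => sq_nonneg _
    have hαX2 : 0 ≤ α * (∑ i, ∑ jj, (xp i jj - x k i jj)^2) := mul_nonneg hα.le hSpnn
    have hρQH : 0 ≤ ρ * (dlt ⬝ᵥ ((PH ⊗ₖ (1 : Matrix (Blk m p) (Blk m p) ℝ)) *ᵥ dlt)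
        - dlt ⬝ᵥ (Htld *ᵥ dlt)) := mul_nonneg hρ.le (by linarith)
    have hρQH2 : 0 ≤ ρ * (dlt ⬝ᵥ ((PH ⊗ₖ (1 : Matrix (Blk m p) (Blk m p) ℝ)) *ᵥ dlt)) :=
      mul_nonneg hρ.le hQH
    have hflip1 : (∑ i, ∑ jj, (xp i jj - xs i jj)^2) = (∑ i, ∑ jj, (xs i jj - xp i jj)^2) :=
      Finset.sum_congr rfl fun i _ => Finset.sum_congr rfl fun jj _ => by ring
    have hflip2 : (∑ i, ∑ jj, (x k i jj - xs i jj)^2)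
        = (∑ i, ∑ jj, (xs i jj - x k i jj)^2) :=
      Finset.sum_congr rfl fun i _ => Finset.sum_congr rfl fun jj _ => by ring
    have hquadA1 : quadForm A dlt = dlt ⬝ᵥ (A *ᵥ dlt) := rfl
    have hquadA2 : quadForm A gam = gam ⬝ᵥ (A *ᵥ gam) := rfl
    rw [hqnext, hflip1, hflip2]
    linarith [hE4, hsplitD, hApol, hqdot, hq3, hQdel, hρQH, hρQH2, hαX2,
      hquadA1.le, hquadA1.ge, hquadA2.le, hquadA2.ge]
  -- ## Part 4 : conclusion
  have hV0 : ∀ k : ℕ, quadForm A (y k - ys) + α * (∑ i, ∑ jj, (x k i jj - xs i jj)^2)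
      + (1/ρ) * quadForm Htdag (Hhalf *ᵥ z k - vstar)
      ≤ quadForm A (y 0 - ys) + α * (∑ i, ∑ jj, (x 0 i jj - xs i jj)^2)
      + (1/ρ) * quadForm Htdag (Hhalf *ᵥ z 0 - vstar) := by
    intro k
    induction k with
    | zero => exact le_rfl
    | succ n ih => exact le_trans (hVmono n) ih
  have hQd0 : ∀ k : ℕ, 0 ≤ quadForm Htdag (Hhalf *ᵥ z k - vstar) := by
    intro k
    have e : Hhalf *ᵥ z k - vstar = Hhalf *ᵥ (z k - zstar) := by
      rw [Matrix.mulVec_sub, hvstar]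
    rw [quadForm, e]
    exact hQdnonneg (z k - zstar)
  have hXnn : ∀ k : ℕ, 0 ≤ (∑ i, ∑ jj, (x k i jj - xs i jj)^2) := fun k =>
    Finset.sum_nonneg fun i _ => Finset.sum_nonneg fun jj _ => sq_nonneg _
  have hlam_quad : (fun _ : Fin N => (1:ℝ)) ⬝ᵥ (PA *ᵥ fun _ : Fin N => (1:ℝ))
      ≤ lam1 * (N:ℝ) := by
    have h := aux_rayleigh_le_lam1 PA hPA.1 lam1 hlam1max (fun _ => 1)
    have hdot : (fun _ : Fin N => (1:ℝ)) ⬝ᵥ (fun _ : Fin N => (1:ℝ)) = (N:ℝ) := by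
      simp [dotProduct]
    rw [hdot] at h
    exact h
  have hsnn : (0:ℝ) ≤ (∑ j : Fin m, (mus j)^2) + ∑ j : Fin p, (lams j)^2 := by positivity
  have hQAys : quadForm A ys
      ≤ ((∑ j : Fin m, (mus j)^2) + ∑ j : Fin p, (lams j)^2) * (lam1 * (N:ℝ)) := by
    rw [quadForm, hA, aux_kron_one_quad]
    have hblk : ∀ b : Blk m p,
        (fun i => ys (i, b)) ⬝ᵥ (PA *ᵥ fun i => ys (i, b))
        = (Sum.elim mus lams b)^2
          * ((fun _ : Fin N => (1:ℝ)) ⬝ᵥ (PA *ᵥ fun _ : Fin N => (1:ℝ))) := by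
      intro b
      have e : (fun i => ys (i, b)) = fun _ : Fin N => Sum.elim mus lams b := by
        funext i; exact hys i b
      have e2 : (fun _ : Fin N => Sum.elim mus lams b)
          = (Sum.elim mus lams b) • (fun _ : Fin N => (1:ℝ)) := by
        funext i; simp
      rw [e, e2, Matrix.mulVec_smul, smul_dotProduct, dotProduct_smul,
        smul_eq_mul, smul_eq_mul]
      ring
    rw [Finset.sum_congr rfl (fun b _ => hblk b), Fintype.sum_sum_type]
    simp only [Sum.elim_inl, Sum.elim_inr]
    rw [← Finset.sum_mul, ← Finset.sum_mul, ← add_mul]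
    exact mul_le_mul_of_nonneg_left hlam_quad hsnn
  have hsqys : Real.sqrt (quadForm A ys) ≤ C1 := by
    rw [hC1]
    calc Real.sqrt (quadForm A ys)
        ≤ Real.sqrt (((∑ j : Fin m, (mus j)^2) + ∑ j : Fin p, (lams j)^2) * (lam1 * (N:ℝ))) :=
          Real.sqrt_le_sqrt hQAys
      _ = Real.sqrt ((N:ℝ) * lam1) * Real.sqrt ((∑ j : Fin m, (mus j)^2) + ∑ j : Fin p, (lams j)^2) := by
          rw [Real.sqrt_mul hsnn, mul_comm lam1 ((N:ℝ)), mul_comm]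
  intro k hk
  have htri : Real.sqrt (quadForm A (y k))
      ≤ Real.sqrt (quadForm A (y k - ys)) + Real.sqrt (quadForm A ys) := by
    have e : y k = (y k - ys) + ys := by abel
    calc Real.sqrt (quadForm A (y k))
        = Real.sqrt (quadForm A ((y k - ys) + ys)) := by rw [← e]
      _ ≤ _ := by
          rw [quadForm, quadForm, quadForm]
          exact aux_psd_sqrt_quad_add A hAsym hApsd _ _
  have hq1 : quadForm A (y k - ys)
      ≤ quadForm A (y 0 - ys) + α * (∑ i, ∑ jj, (x 0 i jj - xs i jj)^2)
        + (1/ρ) * quadForm Htdag (Hhalf *ᵥ z 0 - vstar) := by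
    have t1 : 0 ≤ α * (∑ i, ∑ jj, (x k i jj - xs i jj)^2) := mul_nonneg hα.le (hXnn k)
    have t2 : 0 ≤ (1/ρ) * quadForm Htdag (Hhalf *ᵥ z k - vstar) :=
      mul_nonneg (by positivity) (hQd0 k)
    linarith [hV0 k]
  have hq2 : quadForm A (y 0 - ys) ≤ (Real.sqrt (quadForm A (y 0)) + C1)^2 := by
    have h1 : quadForm A (y 0 - ys)
        ≤ (Real.sqrt (quadForm A (y 0)) + Real.sqrt (quadForm A ys))^2 := by
      rw [quadForm, quadForm, quadForm]
      exact aux_psd_quad_sub_le A hAsym hApsd (y 0) ys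
    have h2 : (Real.sqrt (quadForm A (y 0)) + Real.sqrt (quadForm A ys))^2
        ≤ (Real.sqrt (quadForm A (y 0)) + C1)^2 :=
      pow_le_pow_left₀ (by positivity) (add_le_add_right hsqys _) 2
    linarith
  have hWdef : quadForm A (y k - ys) ≤ (Real.sqrt (quadForm A (y 0)) + C1)^2
      + α * (∑ i, ∑ jj, (x 0 i jj - xs i jj)^2)
      + (1/ρ) * quadForm Htdag (Hhalf *ᵥ z 0 - vstar) := by linarith [hq1, hq2]
  have hsqk : Real.sqrt (quadForm A (y k - ys)) ≤ C2 := by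
    rw [hC2]
    exact Real.sqrt_le_sqrt hWdef
  linarith [htri, hsqk, hsqys]
end
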